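/- arXiv:2304.02686 — 11 statements merged into one kernel-verified Lean document; each statement's English description precedes it below -/
import Mathlib

section
/- Suppose T is alternated. Then the constant function h is a best approximation of T in F_k for every k ∈ ℝ; more precisely, ‖T − h(𝔱)‖_∞ ≤ ‖T − f(𝔱)‖_∞ for every f ∈ F̄_k, and the inequality is strict whenever f(t) = a·e^{kt} + b with a ≠ 0 and k ≠ 0 (i.e., whenever f is a non-constant exponential). -/
/-!
If `T` attains its maximum at `i` and its minimum at `j`, then for every `g` the two errors at
`i` and `j` give `T i - T j ≤ 2 ‖T - g‖ + (g i - g j)`, so any `g` with `g i ≤ g j` is at distance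
at least `(max T - min T) / 2`, which is exactly the error of the midpoint constant; `g i < g j`
makes the bound strict. A function `t ↦ a e^{kt} + b` is monotone on the nodes, so alternation
always supplies such a pair (a maximum before a minimum if it increases, after one if it
decreases), and it is strictly monotone when `a ≠ 0` and `k ≠ 0`.
-/

open Real

variable {ι : Type*}

def IsAlternated {α : Type*} [LT ι] (T : ι → α) (Tmax Tmin : α) : Prop :=
  (∃ M₁ m₁ M₂ : ι, M₁ < m₁ ∧ m₁ < M₂ ∧ T M₁ = Tmax ∧ T M₂ = Tmax ∧ T m₁ = Tmin) ∨
    (∃ m₁ M₁ m₂ : ι, m₁ < M₁ ∧ M₁ < m₂ ∧ T m₁ = Tmin ∧ T m₂ = Tmin ∧ T M₁ = Tmax)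

theorem IsAlternated.exists_max_min_rel {α β : Type*} [LT ι] {T : ι → α} {Tmax Tmin : α}
    (hT : IsAlternated T Tmax Tmin) {g : ι → β} {r : β → β → Prop}
    (hg : (∀ i j, i < j → r (g i) (g j)) ∨ (∀ i j, i < j → r (g j) (g i))) :
    ∃ i j, T i = Tmax ∧ T j = Tmin ∧ r (g i) (g j) := by
  rcases hT with ⟨M₁, m₁, M₂, h₁, h₂, hM₁, hM₂, hm₁⟩ | ⟨m₁, M₁, m₂, h₁, h₂, hm₁, hm₂, hM₁⟩ <;>
    rcases hg with hg | hg
  exacts [⟨M₁, m₁, hM₁, hm₁, hg _ _ h₁⟩, ⟨M₂, m₁, hM₂, hm₁, hg _ _ h₂⟩,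
    ⟨M₁, m₂, hM₁, hm₂, hg _ _ h₂⟩, ⟨M₁, m₁, hM₁, hm₁, hg _ _ h₁⟩]

section SupNorm

variable [Fintype ι]

theorem sub_le_two_mul_norm_sub_add (T g : ι → ℝ) (i j : ι) :
    T i - T j ≤ 2 * ‖T - g‖ + (g i - g j) := by
  have hi := norm_le_pi_norm (T - g) i
  have hj := norm_le_pi_norm (T - g) j
  simp only [Pi.sub_apply, Real.norm_eq_abs] at hi hj
  linarith [le_abs_self (T i - g i), neg_abs_le (T j - g j)]

theorem norm_sub_const_midpoint {T : ι → ℝ} {Tmax Tmin : ℝ}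
    (hmax : IsGreatest (Set.range T) Tmax) (hmin : IsLeast (Set.range T) Tmin) :
    ‖T - fun _ => (Tmax + Tmin) / 2‖ = (Tmax - Tmin) / 2 := by
  obtain ⟨i, hi⟩ := hmax.1
  obtain ⟨j, hj⟩ := hmin.1
  have hle : ∀ l, Tmin ≤ T l ∧ T l ≤ Tmax := fun l => ⟨hmin.2 ⟨l, rfl⟩, hmax.2 ⟨l, rfl⟩⟩
  apply le_antisymm
  · refine (pi_norm_le_iff_of_nonneg (by linarith [hle i])).2 fun l => ?_
    rw [Pi.sub_apply, Real.norm_eq_abs, abs_le]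
    constructor <;> linarith [hle l]
  · linarith [sub_le_two_mul_norm_sub_add T (fun _ => (Tmax + Tmin) / 2) i j]

end SupNorm

theorem monotone_or_antitone_mul_exp_mul_add (a k b : ℝ) :
    Monotone (fun x => a * exp (k * x) + b) ∨ Antitone (fun x => a * exp (k * x) + b) := by
  have hexp : Monotone (fun x => exp (k * x)) ∨ Antitone (fun x => exp (k * x)) :=
    (le_total 0 k).imp (fun hk => exp_monotone.comp (monotone_mul_left_of_nonneg hk))
      (fun hk => exp_monotone.comp_antitone (antitone_mul_left hk))
  rcases le_total 0 a with ha | ha <;> rcases hexp with h | h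
  exacts [.inl ((h.const_mul ha).add_const b), .inr ((h.const_mul ha).add_const b),
    .inr ((h.const_mul_of_nonpos ha).add_const b), .inl ((h.const_mul_of_nonpos ha).add_const b)]

theorem strictMono_or_strictAnti_mul_exp_mul_add {a k : ℝ} (ha : a ≠ 0) (hk : k ≠ 0) (b : ℝ) :
    StrictMono (fun x => a * exp (k * x) + b) ∨ StrictAnti (fun x => a * exp (k * x) + b) := by
  have hexp : StrictMono (fun x => exp (k * x)) ∨ StrictAnti (fun x => exp (k * x)) :=
    (hk.lt_or_gt.imp (fun hk => exp_strictMono.comp_strictAnti (strictAnti_mul_left hk))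
      (fun hk => exp_strictMono.comp (strictMono_mul_left_of_pos hk))).symm
  rcases ha.lt_or_gt with ha | ha <;> rcases hexp with h | h
  exacts [.inr ((h.const_mul_of_neg ha).add_const b), .inl ((h.const_mul_of_neg ha).add_const b),
    .inl ((h.const_mul ha).add_const b), .inr ((h.const_mul ha).add_const b)]

/-- If `T` is alternated, the constant function
`h(t) = (max T + min T)/2` is a best approximation of `T` in `F_k` for every
`k ∈ ℝ`, and it is strictly better than any non-constant exponential
`t ↦ a·e^{kt} + b` (i.e. `a ≠ 0`, `k ≠ 0`).  The norm on `Fin n → ℝ` is the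
sup-norm. -/
theorem chebyshev_alternated_constant_is_best {n : ℕ}
    (t : Fin n → ℝ) (ht : StrictMono t) (T : Fin n → ℝ)
    (Tmax Tmin : ℝ)
    (hmax : IsGreatest (Set.range T) Tmax) (hmin : IsLeast (Set.range T) Tmin)
    (halt :
      (∃ M₁ m₁ M₂ : Fin n, M₁ < m₁ ∧ m₁ < M₂ ∧
        T M₁ = Tmax ∧ T M₂ = Tmax ∧ T m₁ = Tmin) ∨
      (∃ m₁ M₁ m₂ : Fin n, m₁ < M₁ ∧ M₁ < m₂ ∧
        T m₁ = Tmin ∧ T m₂ = Tmin ∧ T M₁ = Tmax))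
    (k : ℝ) :
    ∀ a b : ℝ,
      ‖T - (fun _ => (Tmax + Tmin) / 2)‖ ≤
        ‖T - (fun i => a * Real.exp (k * t i) + b)‖ ∧
      (a ≠ 0 → k ≠ 0 →
        ‖T - (fun _ => (Tmax + Tmin) / 2)‖ <
          ‖T - (fun i => a * Real.exp (k * t i) + b)‖) := by
  intro a b
  have halt : IsAlternated T Tmax Tmin := halt
  have hbound := sub_le_two_mul_norm_sub_add T (fun i => a * exp (k * t i) + b)
  rw [norm_sub_const_midpoint hmax hmin]
  refine ⟨?_, fun ha hk => ?_⟩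
  · obtain ⟨i, j, hi, hj, hij⟩ := halt.exists_max_min_rel (r := (· ≤ ·))
      ((monotone_or_antitone_mul_exp_mul_add a k b).imp
        (fun hf _ _ h => hf (ht h).le) (fun hf _ _ h => hf (ht h).le))
    linarith [hbound i j]
  · obtain ⟨i, j, hi, hj, hij⟩ := halt.exists_max_min_rel (r := (· < ·))
      ((strictMono_or_strictAnti_mul_exp_mul_add ha hk b).imp
        (fun hf _ _ h => hf (ht h)) (fun hf _ _ h => hf (ht h)))
    linarith [hbound i j]
end

section
/- Assume T is non-constant and k < 0. Let m be the smallest index with T_m = min_i T_i and M the largest index with T_M = max_i T_i, and for i ≠ m set a_{im} = (T_i − T_m)/(e^{k t_i} − e^{k t_m}), for j ≠ M set a_{jM} = (T_j − T_M)/(e^{k t_j} − e^{k t_M}). Then: a_{im} > 0 for every i < m; a_{im} ≤ 0 for every i > m; a_{jM} > 0 for every j > M; and a_{jM} ≤ 0 for every j < M. -/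
/-! For `k < 0` the map `s ↦ exp (k s)` is strictly decreasing, so each denominator
`e^{k t_i} - e^{k t_j}` has the sign opposite to that of `i - j`. The numerators have the
sign dictated by extremality of `T_m` and `T_M`, and they cannot vanish on the side where
`m` is the first minimiser, resp. `M` the last maximiser. -/

open Real

theorem strictAnti_exp_const_mul_of_neg {ι : Type*} [Preorder ι] {t : ι → ℝ}
    (ht : StrictMono t) {k : ℝ} (hk : k < 0) : StrictAnti fun i => exp (k * t i) :=
  exp_strictMono.comp_strictAnti (ht.const_mul_of_neg hk)

section FirstMinLastMax

variable {ι α : Type*} [LinearOrder ι] [PartialOrder α] {T : ι → α}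

theorem lt_apply_of_lt_firstMin {m i : ι} (hmin : ∀ j, T m ≤ T j)
    (hfirst : ∀ j, T j = T m → m ≤ j) (hi : i < m) : T m < T i :=
  (hmin i).lt_of_ne fun h => (hfirst i h.symm).not_gt hi

theorem apply_lt_of_lastMax_lt {M j : ι} (hmax : ∀ i, T i ≤ T M)
    (hlast : ∀ i, T i = T M → i ≤ M) (hj : M < j) : T j < T M :=
  (hmax j).lt_of_ne fun h => (hlast j h).not_gt hj

end FirstMinLastMax

theorem interpolation_coefficients_signs_general {n : ℕ}
    (t : Fin n → ℝ) (ht : StrictMono t) (T : Fin n → ℝ)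
    (k : ℝ) (hk : k < 0)
    (m M : Fin n)
    (hm_min : ∀ i, T m ≤ T i) (hm_first : ∀ i, T i = T m → m ≤ i)
    (hM_max : ∀ i, T i ≤ T M) (hM_last : ∀ i, T i = T M → i ≤ M) :
    (∀ i, i < m →
      0 < (T i - T m) / (Real.exp (k * t i) - Real.exp (k * t m))) ∧
    (∀ i, m < i →
      (T i - T m) / (Real.exp (k * t i) - Real.exp (k * t m)) ≤ 0) ∧
    (∀ j, M < j →
      0 < (T j - T M) / (Real.exp (k * t j) - Real.exp (k * t M))) ∧
    (∀ j, j < M →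
      (T j - T M) / (Real.exp (k * t j) - Real.exp (k * t M)) ≤ 0) := by
  have he := strictAnti_exp_const_mul_of_neg ht hk
  refine ⟨fun i hi => ?_, fun i hi => ?_, fun j hj => ?_, fun j hj => ?_⟩
  · exact div_pos (sub_pos.2 (lt_apply_of_lt_firstMin hm_min hm_first hi)) (sub_pos.2 (he hi))
  · exact div_nonpos_of_nonneg_of_nonpos (sub_nonneg.2 (hm_min i)) (sub_nonpos.2 (he hi).le)
  · exact div_pos_of_neg_of_neg (sub_neg.2 (apply_lt_of_lastMax_lt hM_max hM_last hj))
      (sub_neg.2 (he hj))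
  · exact div_nonpos_of_nonpos_of_nonneg (sub_nonpos.2 (hM_max j)) (sub_nonneg.2 (he hj).le)

/-- For non-constant `T` and `k < 0`, with `m` the smallest index
where `T` attains its minimum and `M` the largest index where `T` attains its
maximum, the interpolation coefficients satisfy: `a_{im} > 0` for `i < m`,
`a_{im} ≤ 0` for `i > m`, `a_{jM} > 0` for `j > M`, and `a_{jM} ≤ 0` for
`j < M`. -/
theorem interpolation_coefficients_signs {n : ℕ}
    (t : Fin n → ℝ) (ht : StrictMono t) (T : Fin n → ℝ)
    (hnc : ∃ i j : Fin n, T i ≠ T j)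
    (k : ℝ) (hk : k < 0)
    (m M : Fin n)
    (hm_min : ∀ i, T m ≤ T i) (hm_first : ∀ i, T i = T m → m ≤ i)
    (hM_max : ∀ i, T i ≤ T M) (hM_last : ∀ i, T i = T M → i ≤ M) :
    (∀ i, i < m →
      0 < (T i - T m) / (Real.exp (k * t i) - Real.exp (k * t m))) ∧
    (∀ i, m < i →
      (T i - T m) / (Real.exp (k * t i) - Real.exp (k * t m)) ≤ 0) ∧
    (∀ j, M < j →
      0 < (T j - T M) / (Real.exp (k * t j) - Real.exp (k * t M))) ∧
    (∀ j, j < M →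
      (T j - T M) / (Real.exp (k * t j) - Real.exp (k * t M)) ≤ 0) :=
  interpolation_coefficients_signs_general t ht T k hk m M hm_min hm_first hM_max hM_last
end

section
/- Suppose T is in case 1 (k < 0 and M < m). Then T lies in the band bounded by the exponentials I_h^m(t) = a·e^{kt} + b_m and I_h^M(t) = a·e^{kt} + b_M; that is, for every index i one has a·e^{k t_i} + b_m ≤ T_i ≤ a·e^{k t_i} + b_M. -/
/-!
Put `φ i = e^{k t_i}`, which decreases strictly in `i` because `k < 0`, and read the band as two
lines of slope `a` in the `(φ, T)`-plane, through the minimum `(φ m, T m)` and the maximum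
`(φ M, T M)`. To the left of `m` a point lies above the lower line because `a` is at most its
slope to the minimum; elsewhere `φ i ≤ φ m`, so a line of slope `a ≥ 0` is below `T m ≤ T i`
there. The upper line is the mirror image. Finally `a ≥ 0`: it is one of the slopes, and left of
the minimum or right of the maximum `T` and `φ` both move away from the extremum in the same
direction.
-/

section Band

variable {ι : Type*} [LinearOrder ι] {φ T : ι → ℝ} {a : ℝ}

theorem lower_band_of_isMin {m : ι} (hφ : StrictAnti φ) (hm : ∀ i, T m ≤ T i) (ha : 0 ≤ a)
    (hslope : ∀ i, i < m → a ≤ (T i - T m) / (φ i - φ m)) (i : ι) :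
    a * φ i + (T m - a * φ m) ≤ T i := by
  rcases lt_or_ge i m with hi | hi
  · have h := (le_div_iff₀ (sub_pos.2 (hφ hi))).1 (hslope i hi)
    linarith
  · have h : a * φ i ≤ a * φ m := mul_le_mul_of_nonneg_left (hφ.antitone hi) ha
    linarith [hm i]

theorem upper_band_of_isMax {M : ι} (hφ : StrictAnti φ) (hM : ∀ i, T i ≤ T M) (ha : 0 ≤ a)
    (hslope : ∀ j, M < j → a ≤ (T j - T M) / (φ j - φ M)) (i : ι) :
    T i ≤ a * φ i + (T M - a * φ M) := by
  -- the lower band for `-T` and `-φ` on the reversed order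
  have h := lower_band_of_isMin (ι := ιᵒᵈ) (φ := fun j => -φ (OrderDual.ofDual j))
    (T := fun j => -T (OrderDual.ofDual j)) (m := OrderDual.toDual M)
    (fun _ _ hij => neg_lt_neg (hφ hij)) (fun j => neg_le_neg (hM j)) ha
    (fun j hj => by
      rw [OrderDual.ofDual_toDual, neg_sub_neg, neg_sub_neg, ← neg_sub (T _), ← neg_sub (φ _),
        neg_div_neg_eq]
      exact hslope _ hj)
    (OrderDual.toDual i)
  simp only [OrderDual.ofDual_toDual] at h
  linarith

end Band

theorem case1_band_general {n : ℕ}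
    (t : Fin n → ℝ) (ht : StrictMono t) (T : Fin n → ℝ)
    (k : ℝ) (hk : k < 0)
    (m M : Fin n)
    (hm_min : ∀ i, T m ≤ T i)
    (hM_max : ∀ i, T i ≤ T M)
    (a : ℝ)
    (ha_mem :
      (∃ i, i < m ∧ a = (T i - T m) / (Real.exp (k * t i) - Real.exp (k * t m))) ∨
      (∃ j, M < j ∧ a = (T j - T M) / (Real.exp (k * t j) - Real.exp (k * t M))))
    (ha_min :
      (∀ i, i < m → a ≤ (T i - T m) / (Real.exp (k * t i) - Real.exp (k * t m))) ∧
      (∀ j, M < j → a ≤ (T j - T M) / (Real.exp (k * t j) - Real.exp (k * t M))))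
    (bm bM : ℝ)
    (hbm : bm = T m - a * Real.exp (k * t m))
    (hbM : bM = T M - a * Real.exp (k * t M)) :
    ∀ i, a * Real.exp (k * t i) + bm ≤ T i ∧ T i ≤ a * Real.exp (k * t i) + bM := by
  subst hbm hbM
  have hφ : StrictAnti fun i => Real.exp (k * t i) :=
    Real.exp_strictMono.comp_strictAnti (ht.const_mul_of_neg hk)
  have ha : 0 ≤ a := by
    rcases ha_mem with ⟨i, hi, rfl⟩ | ⟨j, hj, rfl⟩
    · exact div_nonneg (sub_nonneg.2 (hm_min i)) (sub_nonneg.2 (hφ hi).le)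
    · exact div_nonneg_of_nonpos (sub_nonpos.2 (hM_max j)) (sub_nonpos.2 (hφ hj).le)
  exact fun i => ⟨lower_band_of_isMin hφ hm_min ha ha_min.1 i,
    upper_band_of_isMax hφ hM_max ha ha_min.2 i⟩

/-- In case 1 (`k < 0` and `M < m`), the data `T` lies in the band
bounded by the exponentials `I_h^m(t) = a·e^{kt} + b_m` and
`I_h^M(t) = a·e^{kt} + b_M`: for every index `i`,
`a·e^{k t_i} + b_m ≤ T_i ≤ a·e^{k t_i} + b_M`. -/
theorem case1_band {n : ℕ}
    (t : Fin n → ℝ) (ht : StrictMono t) (T : Fin n → ℝ)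
    (k : ℝ) (hk : k < 0)
    (m M : Fin n)
    (hm_min : ∀ i, T m ≤ T i) (hm_first : ∀ i, T i = T m → m ≤ i)
    (hM_max : ∀ i, T i ≤ T M) (hM_last : ∀ i, T i = T M → i ≤ M)
    (hMm : M < m)
    (a : ℝ)
    (ha_mem :
      (∃ i, i < m ∧ a = (T i - T m) / (Real.exp (k * t i) - Real.exp (k * t m))) ∨
      (∃ j, M < j ∧ a = (T j - T M) / (Real.exp (k * t j) - Real.exp (k * t M))))
    (ha_min :
      (∀ i, i < m → a ≤ (T i - T m) / (Real.exp (k * t i) - Real.exp (k * t m))) ∧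
      (∀ j, M < j → a ≤ (T j - T M) / (Real.exp (k * t j) - Real.exp (k * t M))))
    (bm bM : ℝ)
    (hbm : bm = T m - a * Real.exp (k * t m))
    (hbM : bM = T M - a * Real.exp (k * t M)) :
    ∀ i, a * Real.exp (k * t i) + bm ≤ T i ∧ T i ≤ a * Real.exp (k * t i) + bM :=
  case1_band_general t ht T k hk m M hm_min hM_max a ha_mem ha_min bm bM hbm hbM
end

section
/- Suppose T is in case 1 (k < 0 and M < m) and let I_h(t) = a·e^{kt} + (b_m + b_M)/2. Then the max-norm error of I_h is attained at the indices M and m with opposite signs: ‖T − I_h(𝔱)‖_∞ = T_M − I_h(t_M) = −(T_m − I_h(t_m)) = (b_M − b_m)/2. -/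
/-!
Write `e i = exp (k tᵢ)`, which is strictly decreasing in `i` since `k < 0`, and let
`rᵢ = Tᵢ - a eᵢ` be the residuals after removing the exponential part. The slope conditions
defining `a` say exactly that `r` is maximal at `M` and minimal at `m`: on the far side of `M`
(resp. `m`) this is `ha_min`, on the near side it follows from `T_M` being the maximum
(resp. `T_m` the minimum) together with `a ≥ 0`. Shifting `r` by the midpoint of its range
then gives a sup-norm error of half that range, attained with opposite signs at `M` and `m`.
-/

section Residual

variable {ι : Type*} [LinearOrder ι] {e T : ι → ℝ} {a : ℝ}

lemma residual_le_residual_of_isMax (he : StrictAnti e) (ha : 0 ≤ a) {M : ι}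
    (hM_max : ∀ i, T i ≤ T M) (hslope : ∀ j, M < j → a ≤ (T j - T M) / (e j - e M)) (i : ι) :
    T i - a * e i ≤ T M - a * e M := by
  rcases lt_trichotomy i M with h | rfl | h
  · nlinarith [he h, hM_max i]
  · exact le_rfl
  · have hd : e i - e M < 0 := sub_neg.mpr (he h)
    nlinarith [(le_div_iff_of_neg hd).mp (hslope i h)]

lemma residual_le_residual_of_isMin (he : StrictAnti e) (ha : 0 ≤ a) {m : ι}
    (hm_min : ∀ i, T m ≤ T i) (hslope : ∀ i, i < m → a ≤ (T i - T m) / (e i - e m)) (i : ι) :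
    T m - a * e m ≤ T i - a * e i := by
  rcases lt_trichotomy i m with h | rfl | h
  · have hd : 0 < e i - e m := sub_pos.mpr (he h)
    nlinarith [(le_div_iff₀ hd).mp (hslope i h)]
  · exact le_rfl
  · nlinarith [he h, hm_min i]

end Residual

lemma pi_norm_sub_midpoint_eq {ι : Type*} [Fintype ι] (r : ι → ℝ) {lo hi : ι}
    (hlo : ∀ i, r lo ≤ r i) (hhi : ∀ i, r i ≤ r hi) :
    ‖r - fun _ => (r lo + r hi) / 2‖ = (r hi - r lo) / 2 := by
  apply le_antisymm
  · refine (pi_norm_le_iff_of_nonneg (by linarith [hlo hi])).mpr fun i => ?_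
    rw [Pi.sub_apply, Real.norm_eq_abs, abs_le]
    constructor <;> linarith [hlo i, hhi i]
  · calc (r hi - r lo) / 2 = ‖(r - fun _ => (r lo + r hi) / 2 : ι → ℝ) hi‖ := by
          rw [Pi.sub_apply, Real.norm_eq_abs, abs_of_nonneg (by linarith [hlo hi])]; ring
      _ ≤ _ := norm_le_pi_norm _ hi

theorem case1_error_attained_at_m_M_general {n : ℕ}
    (t : Fin n → ℝ) (ht : StrictMono t) (T : Fin n → ℝ)
    (k : ℝ) (hk : k < 0)
    (m M : Fin n)
    (hm_min : ∀ i, T m ≤ T i)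
    (hM_max : ∀ i, T i ≤ T M)
    (a : ℝ)
    (ha_mem :
      (∃ i, i < m ∧ a = (T i - T m) / (Real.exp (k * t i) - Real.exp (k * t m))) ∨
      (∃ j, M < j ∧ a = (T j - T M) / (Real.exp (k * t j) - Real.exp (k * t M))))
    (ha_min :
      (∀ i, i < m → a ≤ (T i - T m) / (Real.exp (k * t i) - Real.exp (k * t m))) ∧
      (∀ j, M < j → a ≤ (T j - T M) / (Real.exp (k * t j) - Real.exp (k * t M))))
    (bm bM : ℝ)
    (hbm : bm = T m - a * Real.exp (k * t m))
    (hbM : bM = T M - a * Real.exp (k * t M)) :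
    ‖T - (fun i => a * Real.exp (k * t i) + (bm + bM) / 2)‖ =
      T M - (a * Real.exp (k * t M) + (bm + bM) / 2) ∧
    T M - (a * Real.exp (k * t M) + (bm + bM) / 2) =
      -(T m - (a * Real.exp (k * t m) + (bm + bM) / 2)) ∧
    -(T m - (a * Real.exp (k * t m) + (bm + bM) / 2)) = (bM - bm) / 2 := by
  subst hbm hbM
  set e : Fin n → ℝ := fun i => Real.exp (k * t i)
  have he : StrictAnti e := Real.exp_strictMono.comp_strictAnti (ht.const_mul_of_neg hk)
  have ha : 0 ≤ a := by
    rcases ha_mem with ⟨i, hi, rfl⟩ | ⟨j, hj, rfl⟩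
    · exact div_nonneg (sub_nonneg.mpr (hm_min i)) (sub_pos.mpr (he hi)).le
    · exact div_nonneg_of_nonpos (sub_nonpos.mpr (hM_max j)) (sub_neg.mpr (he hj)).le
  have hnorm := pi_norm_sub_midpoint_eq (fun i => T i - a * e i)
    (residual_le_residual_of_isMin he ha hm_min ha_min.1)
    (residual_le_residual_of_isMax he ha hM_max ha_min.2)
  have hshift : (T - fun i => a * e i + (T m - a * e m + (T M - a * e M)) / 2) =
      (fun i => T i - a * e i) - fun _ => (T m - a * e m + (T M - a * e M)) / 2 := by
    ext i; simp only [Pi.sub_apply]; ring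
  refine ⟨?_, by ring, by ring⟩
  rw [hshift, hnorm]; ring

/-- In case 1 (`k < 0` and `M < m`), the max-norm error of
`I_h(t) = a·e^{kt} + (b_m + b_M)/2` is attained at the indices `M` and `m` with
opposite signs:
`‖T − I_h(𝔱)‖_∞ = T_M − I_h(t_M) = −(T_m − I_h(t_m)) = (b_M − b_m)/2`.
The norm on `Fin n → ℝ` is the sup-norm. -/
theorem case1_error_attained_at_m_M {n : ℕ}
    (t : Fin n → ℝ) (ht : StrictMono t) (T : Fin n → ℝ)
    (k : ℝ) (hk : k < 0)
    (m M : Fin n)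
    (hm_min : ∀ i, T m ≤ T i) (hm_first : ∀ i, T i = T m → m ≤ i)
    (hM_max : ∀ i, T i ≤ T M) (hM_last : ∀ i, T i = T M → i ≤ M)
    (hMm : M < m)
    (a : ℝ)
    (ha_mem :
      (∃ i, i < m ∧ a = (T i - T m) / (Real.exp (k * t i) - Real.exp (k * t m))) ∨
      (∃ j, M < j ∧ a = (T j - T M) / (Real.exp (k * t j) - Real.exp (k * t M))))
    (ha_min :
      (∀ i, i < m → a ≤ (T i - T m) / (Real.exp (k * t i) - Real.exp (k * t m))) ∧
      (∀ j, M < j → a ≤ (T j - T M) / (Real.exp (k * t j) - Real.exp (k * t M))))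
    (bm bM : ℝ)
    (hbm : bm = T m - a * Real.exp (k * t m))
    (hbM : bM = T M - a * Real.exp (k * t M)) :
    ‖T - (fun i => a * Real.exp (k * t i) + (bm + bM) / 2)‖ =
      T M - (a * Real.exp (k * t M) + (bm + bM) / 2) ∧
    T M - (a * Real.exp (k * t M) + (bm + bM) / 2) =
      -(T m - (a * Real.exp (k * t m) + (bm + bM) / 2)) ∧
    -(T m - (a * Real.exp (k * t m) + (bm + bM) / 2)) = (bM - bm) / 2 :=
  case1_error_attained_at_m_M_general t ht T k hk m M hm_min hM_max a ha_mem ha_min bm bM hbm hbM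
end

section
/- (Constructive method.) Suppose T is in case 1 (k < 0 and M < m). Then the exponential I_h(t) = a·e^{kt} + (b_m + b_M)/2 strictly improves the approximation given by the constant h: ‖T − I_h(𝔱)‖_∞ < ‖T − h(𝔱)‖_∞. -/
/-!
Write `r = T - a e^{k𝔱}`. Since `a` is the smallest of the slopes `a_{im}` (`i < m`) and `a_{jM}`
(`j > M`), and `e^{kt}` decreases, the minimum of `r` is still attained at `m` and its maximum still
at `M`. Hence `I_h = a e^{kt} + (r_m + r_M)/2` is within `(r_M - r_m)/2` of `T`, and
`r_M - r_m = (T_M - T_m) - a (e^{k t_M} - e^{k t_m})` is strictly smaller than `T_M - T_m`,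
because `a > 0` and `t_M < t_m`, whereas `h` misses `T_M` by `(T_M - T_m)/2`.
-/

lemma strictAnti_exp_mul {ι : Type*} [Preorder ι] {t : ι → ℝ} (ht : StrictMono t) {k : ℝ}
    (hk : k < 0) : StrictAnti fun i => Real.exp (k * t i) :=
  fun _ _ hij => Real.exp_lt_exp.mpr (mul_lt_mul_of_neg_left (ht hij) hk)

section Residual

variable {ι : Type*} [LinearOrder ι] {e T : ι → ℝ} {a : ℝ}

lemma sub_mul_min_le_of_le_slopes {m : ι} (he : StrictAnti e) (hm : ∀ i, T m ≤ T i)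
    (ha : 0 ≤ a) (hslope : ∀ i, i < m → a ≤ (T i - T m) / (e i - e m)) (i : ι) :
    T m - a * e m ≤ T i - a * e i := by
  rcases lt_or_ge i m with him | hmi
  · have := (le_div_iff₀ (sub_pos.2 (he him))).1 (hslope i him)
    linarith
  · have := mul_le_mul_of_nonneg_left (he.antitone hmi) ha
    linarith [hm i]

lemma sub_mul_le_max_of_le_slopes {M : ι} (he : StrictAnti e) (hM : ∀ i, T i ≤ T M)
    (ha : 0 ≤ a) (hslope : ∀ j, M < j → a ≤ (T j - T M) / (e j - e M)) (i : ι) :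
    T i - a * e i ≤ T M - a * e M := by
  rcases lt_or_ge M i with hMi | hiM
  · have := (le_div_iff_of_neg (sub_neg.2 (he hMi))).1 (hslope i hMi)
    linarith
  · have := mul_le_mul_of_nonneg_left (he.antitone hiM) ha
    linarith [hM i]

end Residual

lemma norm_sub_add_midpoint_le {ι : Type*} [Fintype ι] {T g : ι → ℝ} {lo hi : ℝ}
    (hlohi : lo ≤ hi) (h : ∀ i, lo ≤ T i - g i ∧ T i - g i ≤ hi) :
    ‖T - fun i => g i + (lo + hi) / 2‖ ≤ (hi - lo) / 2 := by
  refine (pi_norm_le_iff_of_nonneg (by linarith)).2 fun i => ?_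
  rw [Pi.sub_apply, Real.norm_eq_abs, abs_le]
  constructor <;> linarith [h i]

lemma sub_div_two_le_norm_sub_midpoint {ι : Type*} [Fintype ι] (T : ι → ℝ) (M m : ι) :
    (T M - T m) / 2 ≤ ‖T - fun _ => (T M + T m) / 2‖ := by
  have := norm_le_pi_norm (T - fun _ => (T M + T m) / 2) M
  rw [Pi.sub_apply, Real.norm_eq_abs] at this
  linarith [le_abs_self (T M - (T M + T m) / 2)]

/-- Constructive method: In case 1 (`k < 0` and `M < m`), the
exponential `I_h(t) = a·e^{kt} + (b_m + b_M)/2` strictly improves the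
approximation given by the constant `h = (max T + min T)/2 = (T_M + T_m)/2`:
`‖T − I_h(𝔱)‖_∞ < ‖T − h(𝔱)‖_∞`.  The norm on `Fin n → ℝ` is the sup-norm. -/
theorem case1_constructive_improves {n : ℕ}
    (t : Fin n → ℝ) (ht : StrictMono t) (T : Fin n → ℝ)
    (k : ℝ) (hk : k < 0)
    (m M : Fin n)
    (hm_min : ∀ i, T m ≤ T i) (hm_first : ∀ i, T i = T m → m ≤ i)
    (hM_max : ∀ i, T i ≤ T M) (hM_last : ∀ i, T i = T M → i ≤ M)
    (hMm : M < m)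
    (a : ℝ)
    (ha_mem :
      (∃ i, i < m ∧ a = (T i - T m) / (Real.exp (k * t i) - Real.exp (k * t m))) ∨
      (∃ j, M < j ∧ a = (T j - T M) / (Real.exp (k * t j) - Real.exp (k * t M))))
    (ha_min :
      (∀ i, i < m → a ≤ (T i - T m) / (Real.exp (k * t i) - Real.exp (k * t m))) ∧
      (∀ j, M < j → a ≤ (T j - T M) / (Real.exp (k * t j) - Real.exp (k * t M))))
    (bm bM : ℝ)
    (hbm : bm = T m - a * Real.exp (k * t m))
    (hbM : bM = T M - a * Real.exp (k * t M)) :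
    ‖T - (fun i => a * Real.exp (k * t i) + (bm + bM) / 2)‖ <
      ‖T - (fun _ => (T M + T m) / 2)‖ := by
  subst hbm hbM
  have he := strictAnti_exp_mul ht hk
  have ha : 0 < a := by
    rcases ha_mem with ⟨i, him, rfl⟩ | ⟨j, hMj, rfl⟩
    · have hTi : T m < T i := (hm_min i).lt_of_ne fun h => (hm_first i h.symm).not_gt him
      exact div_pos (sub_pos.2 hTi) (sub_pos.2 (he him))
    · have hTj : T j < T M := (hM_max j).lt_of_ne fun h => (hM_last j h).not_gt hMj
      exact div_pos_of_neg_of_neg (sub_neg.2 hTj) (sub_neg.2 (he hMj))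
  have hres := fun i => And.intro (sub_mul_min_le_of_le_slopes he hm_min ha.le ha_min.1 i)
    (sub_mul_le_max_of_le_slopes he hM_max ha.le ha_min.2 i)
  calc _ ≤ ((T M - a * Real.exp (k * t M)) - (T m - a * Real.exp (k * t m))) / 2 :=
        norm_sub_add_midpoint_le ((hres m).2) hres
    _ < (T M - T m) / 2 := by nlinarith [he hMm]
    _ ≤ _ := sub_div_two_le_norm_sub_midpoint T M m
end

section
/- Suppose T is in case 1 (k < 0 and M < m) and let I_h(t) = a·e^{kt} + (b_m + b_M)/2. Then every index i with ‖T − I_h(𝔱)‖_∞ = −(T_i − I_h(t_i)) satisfies t_i ≤ t_m, and every index i with ‖T − I_h(𝔱)‖_∞ = T_i − I_h(t_i) satisfies t_i ≥ t_M. -/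
/-! The fitted coefficient `a` is a slope of `T` against the strictly decreasing `e^{k t}` between
two points whose values are ordered the same way as the exponentials, so `a > 0`. Hence the
intercept `c_l = T_l − a e^{k t_l}` is strictly larger after `m` than at `m` (where `T` is
minimal) and strictly smaller before `M` than at `M` (where `T` is maximal). The residual
`T − I_h(𝔱)` is `c` shifted by a constant, so at an index after `m` its negative is beaten by
the residual at `m`, and at an index before `M` it is beaten by the residual at `M`. -/

section

variable {ι : Type*} [LinearOrder ι] {T E : ι → ℝ} {a : ℝ} {i j m M : ι}

lemma lt_of_lt_of_first_min (hm_min : ∀ l, T m ≤ T l) (hm_first : ∀ l, T l = T m → m ≤ l)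
    (hi : i < m) : T m < T i :=
  (hm_min i).lt_of_ne fun h => (hm_first i h.symm).not_gt hi

lemma lt_of_last_max_lt (hM_max : ∀ l, T l ≤ T M) (hM_last : ∀ l, T l = T M → l ≤ M)
    (hj : M < j) : T j < T M :=
  (hM_max j).lt_of_ne fun h => (hM_last j h).not_gt hj

lemma slope_pos_of_first_min (hE : StrictAnti E) (hm_min : ∀ l, T m ≤ T l)
    (hm_first : ∀ l, T l = T m → m ≤ l) (hi : i < m) :
    0 < (T i - T m) / (E i - E m) :=
  div_pos (sub_pos.2 (lt_of_lt_of_first_min hm_min hm_first hi)) (sub_pos.2 (hE hi))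

lemma slope_pos_of_last_max (hE : StrictAnti E) (hM_max : ∀ l, T l ≤ T M)
    (hM_last : ∀ l, T l = T M → l ≤ M) (hj : M < j) :
    0 < (T j - T M) / (E j - E M) :=
  div_pos_of_neg_of_neg (sub_neg.2 (lt_of_last_max_lt hM_max hM_last hj)) (sub_neg.2 (hE hj))

lemma intercept_lt_of_min_lt (ha : 0 < a) (hE : StrictAnti E) (hm_min : ∀ l, T m ≤ T l)
    (hj : m < j) : T m - a * E m < T j - a * E j := by
  have := mul_lt_mul_of_pos_left (hE hj) ha
  linarith [hm_min j]

lemma intercept_lt_of_lt_max (ha : 0 < a) (hE : StrictAnti E) (hM_max : ∀ l, T l ≤ T M)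
    (hj : j < M) : T j - a * E j < T M - a * E M := by
  have := mul_lt_mul_of_pos_left (hE hj) ha
  linarith [hM_max j]

end

section

variable {ι : Type*} [Fintype ι] {f : ι → ℝ} {i j : ι}

lemma neg_apply_lt_pi_norm_of_lt (h : f j < f i) : -f i < ‖f‖ :=
  calc -f i < -f j := neg_lt_neg h
    _ ≤ |f j| := neg_le_abs _
    _ ≤ ‖f‖ := norm_le_pi_norm f j

lemma apply_lt_pi_norm_of_lt (h : f i < f j) : f i < ‖f‖ :=
  calc f i < f j := h
    _ ≤ |f j| := le_abs_self _
    _ ≤ ‖f‖ := norm_le_pi_norm f j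

end

theorem case1_critical_points_location_general {n : ℕ}
    (t : Fin n → ℝ) (ht : StrictMono t) (T : Fin n → ℝ)
    (k : ℝ) (hk : k < 0)
    (m M : Fin n)
    (hm_min : ∀ i, T m ≤ T i) (hm_first : ∀ i, T i = T m → m ≤ i)
    (hM_max : ∀ i, T i ≤ T M) (hM_last : ∀ i, T i = T M → i ≤ M)
    (a : ℝ)
    (ha_mem :
      (∃ i, i < m ∧ a = (T i - T m) / (Real.exp (k * t i) - Real.exp (k * t m))) ∨
      (∃ j, M < j ∧ a = (T j - T M) / (Real.exp (k * t j) - Real.exp (k * t M))))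
    (bm bM : ℝ) :
    ∀ i : Fin n,
      (‖T - (fun l => a * Real.exp (k * t l) + (bm + bM) / 2)‖ =
          -(T i - (a * Real.exp (k * t i) + (bm + bM) / 2)) → t i ≤ t m) ∧
      (‖T - (fun l => a * Real.exp (k * t l) + (bm + bM) / 2)‖ =
          T i - (a * Real.exp (k * t i) + (bm + bM) / 2) → t M ≤ t i) := by
  have hE : StrictAnti fun l => Real.exp (k * t l) := fun p q hpq =>
    Real.exp_lt_exp.2 (mul_lt_mul_of_neg_left (ht hpq) hk)
  have ha : 0 < a := by
    rcases ha_mem with ⟨i, hi, rfl⟩ | ⟨j, hj, rfl⟩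
    · exact slope_pos_of_first_min hE hm_min hm_first hi
    · exact slope_pos_of_last_max hE hM_max hM_last hj
  intro i
  refine ⟨fun h => ht.le_iff_le.2 (not_lt.1 fun hmi => ?_),
    fun h => ht.le_iff_le.2 (not_lt.1 fun hiM => ?_)⟩
  · refine (neg_apply_lt_pi_norm_of_lt (f := T - _) (j := m) ?_).ne' h
    have := intercept_lt_of_min_lt ha hE hm_min hmi
    simp only [Pi.sub_apply]
    linarith
  · refine (apply_lt_pi_norm_of_lt (f := T - _) (j := M) ?_).ne' h
    have := intercept_lt_of_lt_max ha hE hM_max hiM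
    simp only [Pi.sub_apply]
    linarith

/-- In case 1 (`k < 0` and `M < m`), with `a ≠ a_{mM}`, every index
`i` where the max-norm error of `I_h(t) = a·e^{kt} + (b_m + b_M)/2` is attained
as `‖T − I_h(𝔱)‖_∞ = −(T_i − I_h(t_i))` satisfies `t_i ≤ t_m`, and every index
`i` where it is attained as `‖T − I_h(𝔱)‖_∞ = T_i − I_h(t_i)` satisfies
`t_i ≥ t_M`. -/
theorem case1_critical_points_location {n : ℕ}
    (t : Fin n → ℝ) (ht : StrictMono t) (T : Fin n → ℝ)
    (k : ℝ) (hk : k < 0)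
    (m M : Fin n)
    (hm_min : ∀ i, T m ≤ T i) (hm_first : ∀ i, T i = T m → m ≤ i)
    (hM_max : ∀ i, T i ≤ T M) (hM_last : ∀ i, T i = T M → i ≤ M)
    (hMm : M < m)
    (a : ℝ)
    (ha_mem :
      (∃ i, i < m ∧ a = (T i - T m) / (Real.exp (k * t i) - Real.exp (k * t m))) ∨
      (∃ j, M < j ∧ a = (T j - T M) / (Real.exp (k * t j) - Real.exp (k * t M))))
    (ha_min :
      (∀ i, i < m → a ≤ (T i - T m) / (Real.exp (k * t i) - Real.exp (k * t m))) ∧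
      (∀ j, M < j → a ≤ (T j - T M) / (Real.exp (k * t j) - Real.exp (k * t M))))
    (hane : a ≠ (T m - T M) / (Real.exp (k * t m) - Real.exp (k * t M)))
    (bm bM : ℝ)
    (hbm : bm = T m - a * Real.exp (k * t m))
    (hbM : bM = T M - a * Real.exp (k * t M)) :
    ∀ i : Fin n,
      (‖T - (fun l => a * Real.exp (k * t l) + (bm + bM) / 2)‖ =
          -(T i - (a * Real.exp (k * t i) + (bm + bM) / 2)) → t i ≤ t m) ∧
      (‖T - (fun l => a * Real.exp (k * t l) + (bm + bM) / 2)‖ =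
          T i - (a * Real.exp (k * t i) + (bm + bM) / 2) → t M ≤ t i) :=
  case1_critical_points_location_general t ht T k hk m M hm_min hm_first hM_max hM_last a ha_mem bm
    bM
end

section
/- Suppose T is in case 1 (k < 0 and M < m), let I_h(t) = a·e^{kt} + (b_m + b_M)/2 and R = T − I_h(𝔱). Let m' be the smallest index with R_{m'} = min_i R_i and M' the largest index with R_{M'} = max_i R_i. Then m' ≤ m, M' ≥ M, and moreover either m' < m or M' > M; in particular m' − M' < m − M. -/
/-!
Put `g i = exp (k tᵢ)`, strictly decreasing in `i` since `k < 0`. The slope `a` is nonnegative, and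
`a ≤ (Tᵢ − Tₘ)/(gᵢ − gₘ)` for `i < m` says exactly that `R i ≥ R m`; for `i ≥ m` this follows from
`Tᵢ ≥ Tₘ` and `a gᵢ ≤ a gₘ`. So `m` still minimises `R`, and symmetrically `M` still maximises it,
whence `m' ≤ m` and `M ≤ M'`. The index attaining the minimal slope `a` makes `R` tie with `R m`
(strictly before `m`) or with `R M` (strictly after `M`), which moves `m'` or `M'`.
-/

section SlopeBounds

variable {ι : Type*} [LinearOrder ι] {T g : ι → ℝ} {a c : ℝ}

lemma le_div_sub_iff_of_gt {x y u v : ℝ} (h : v < u) :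
    a ≤ (x - y) / (u - v) ↔ y - (a * v + c) ≤ x - (a * u + c) := by
  rw [le_div_iff₀ (sub_pos.2 h)]
  constructor <;> intro <;> linarith

lemma le_div_sub_iff_of_lt {x y u v : ℝ} (h : u < v) :
    a ≤ (x - y) / (u - v) ↔ x - (a * u + c) ≤ y - (a * v + c) := by
  rw [le_div_iff_of_neg (sub_neg.2 h)]
  constructor <;> intro <;> linarith

lemma sub_mul_add_eq_of_eq_div_sub {x y u v : ℝ} (h : u ≠ v) (ha : a = (x - y) / (u - v)) :
    x - (a * u + c) = y - (a * v + c) := by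
  have : a * (u - v) = x - y := by rw [ha, div_mul_cancel₀ _ (sub_ne_zero.2 h)]
  linarith

lemma sub_mul_add_min_of_le_slopes (hg : StrictAnti g) (ha : 0 ≤ a) {m : ι}
    (hm : ∀ i, T m ≤ T i) (hslope : ∀ i, i < m → a ≤ (T i - T m) / (g i - g m)) (i : ι) :
    T m - (a * g m + c) ≤ T i - (a * g i + c) := by
  rcases lt_or_ge i m with hi | hi
  · exact (le_div_sub_iff_of_gt (hg hi)).1 (hslope i hi)
  · have := mul_le_mul_of_nonneg_left (hg.antitone hi) ha
    linarith [hm i]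

lemma sub_mul_add_max_of_le_slopes (hg : StrictAnti g) (ha : 0 ≤ a) {M : ι}
    (hM : ∀ i, T i ≤ T M) (hslope : ∀ j, M < j → a ≤ (T j - T M) / (g j - g M)) (i : ι) :
    T i - (a * g i + c) ≤ T M - (a * g M + c) := by
  rcases lt_or_ge M i with hi | hi
  · exact (le_div_sub_iff_of_lt (hg hi)).1 (hslope i hi)
  · have := mul_le_mul_of_nonneg_left (hg.antitone hi) ha
    linarith [hM i]

end SlopeBounds

section ExtremalIndices

variable {ι β : Type*} [Preorder ι] [PartialOrder β] {f : ι → β} {i m' : ι}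

lemma first_minimizer_le (hi : ∀ j, f i ≤ f j) (hm'_le : f m' ≤ f i)
    (hm'_first : ∀ j, f j = f m' → m' ≤ j) : m' ≤ i :=
  hm'_first i (le_antisymm (hi m') hm'_le)

lemma le_last_maximizer (hi : ∀ j, f j ≤ f i) (hm'_ge : f i ≤ f m')
    (hm'_last : ∀ j, f j = f m' → j ≤ m') : i ≤ m' :=
  hm'_last i (le_antisymm hm'_ge (hi m'))

end ExtremalIndices

theorem case1_remainder_indices_shrink_general {n : ℕ}
    (t : Fin n → ℝ) (ht : StrictMono t) (T : Fin n → ℝ)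
    (k : ℝ) (hk : k < 0)
    (m M : Fin n)
    (hm_min : ∀ i, T m ≤ T i)
    (hM_max : ∀ i, T i ≤ T M)
    (a : ℝ)
    (ha_mem :
      (∃ i, i < m ∧ a = (T i - T m) / (Real.exp (k * t i) - Real.exp (k * t m))) ∨
      (∃ j, M < j ∧ a = (T j - T M) / (Real.exp (k * t j) - Real.exp (k * t M))))
    (ha_min :
      (∀ i, i < m → a ≤ (T i - T m) / (Real.exp (k * t i) - Real.exp (k * t m))) ∧
      (∀ j, M < j → a ≤ (T j - T M) / (Real.exp (k * t j) - Real.exp (k * t M))))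
    (bm bM : ℝ)
    (R : Fin n → ℝ)
    (hR : R = fun i => T i - (a * Real.exp (k * t i) + (bm + bM) / 2))
    (m' M' : Fin n)
    (hm'_min : ∀ i, R m' ≤ R i) (hm'_first : ∀ i, R i = R m' → m' ≤ i)
    (hM'_max : ∀ i, R i ≤ R M') (hM'_last : ∀ i, R i = R M' → i ≤ M') :
    m' ≤ m ∧ M ≤ M' ∧ (m' < m ∨ M < M') ∧
      ((m' : ℕ) : ℤ) - ((M' : ℕ) : ℤ) < ((m : ℕ) : ℤ) - ((M : ℕ) : ℤ) := by
  have hg : StrictAnti fun i => Real.exp (k * t i) :=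
    Real.exp_strictMono.comp_strictAnti fun _ _ h => mul_lt_mul_of_neg_left (ht h) hk
  have ha : 0 ≤ a := by
    rcases ha_mem with ⟨i, hi, rfl⟩ | ⟨j, hj, rfl⟩
    · exact div_nonneg (sub_nonneg.2 (hm_min i)) (sub_nonneg.2 (hg hi).le)
    · exact div_nonneg_of_nonpos (sub_nonpos.2 (hM_max j)) (sub_nonpos.2 (hg hj).le)
  subst hR
  have hm := sub_mul_add_min_of_le_slopes (c := (bm + bM) / 2) hg ha hm_min ha_min.1
  have hM := sub_mul_add_max_of_le_slopes (c := (bm + bM) / 2) hg ha hM_max ha_min.2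
  have hm'_le : m' ≤ m := first_minimizer_le hm (hm'_min m) hm'_first
  have hM_le : M ≤ M' := le_last_maximizer hM (hM'_max M) hM'_last
  have hstrict : m' < m ∨ M < M' := by
    rcases ha_mem with ⟨i, hi, hai⟩ | ⟨j, hj, haj⟩
    · have hRi := sub_mul_add_eq_of_eq_div_sub (c := (bm + bM) / 2) (hg hi).ne' hai
      exact .inl ((first_minimizer_le (hRi ▸ hm) (hm'_min i) hm'_first).trans_lt hi)
    · have hRj := sub_mul_add_eq_of_eq_div_sub (c := (bm + bM) / 2) (hg hj).ne haj
      exact .inr (hj.trans_le (le_last_maximizer (hRj ▸ hM) (hM'_max j) hM'_last))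
  refine ⟨hm'_le, hM_le, hstrict, ?_⟩
  rw [Fin.le_def] at hm'_le hM_le
  rcases hstrict with h | h <;> rw [Fin.lt_def] at h <;> omega

/-- In case 1 (`k < 0` and `M < m`), for the remainder
`R = T − I_h(𝔱)` with `I_h(t) = a·e^{kt} + (b_m + b_M)/2`, letting `m'` be the
smallest index where `R` attains its minimum and `M'` the largest index where
`R` attains its maximum, one has `m' ≤ m`, `M' ≥ M`, moreover `m' < m` or
`M' > M`; in particular `m' − M' < m − M` (as integers). -/
theorem case1_remainder_indices_shrink {n : ℕ}
    (t : Fin n → ℝ) (ht : StrictMono t) (T : Fin n → ℝ)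
    (k : ℝ) (hk : k < 0)
    (m M : Fin n)
    (hm_min : ∀ i, T m ≤ T i) (hm_first : ∀ i, T i = T m → m ≤ i)
    (hM_max : ∀ i, T i ≤ T M) (hM_last : ∀ i, T i = T M → i ≤ M)
    (hMm : M < m)
    (a : ℝ)
    (ha_mem :
      (∃ i, i < m ∧ a = (T i - T m) / (Real.exp (k * t i) - Real.exp (k * t m))) ∨
      (∃ j, M < j ∧ a = (T j - T M) / (Real.exp (k * t j) - Real.exp (k * t M))))
    (ha_min :
      (∀ i, i < m → a ≤ (T i - T m) / (Real.exp (k * t i) - Real.exp (k * t m))) ∧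
      (∀ j, M < j → a ≤ (T j - T M) / (Real.exp (k * t j) - Real.exp (k * t M))))
    (bm bM : ℝ)
    (hbm : bm = T m - a * Real.exp (k * t m))
    (hbM : bM = T M - a * Real.exp (k * t M))
    (R : Fin n → ℝ)
    (hR : R = fun i => T i - (a * Real.exp (k * t i) + (bm + bM) / 2))
    (m' M' : Fin n)
    (hm'_min : ∀ i, R m' ≤ R i) (hm'_first : ∀ i, R i = R m' → m' ≤ i)
    (hM'_max : ∀ i, R i ≤ R M') (hM'_last : ∀ i, R i = R M' → i ≤ M') :
    m' ≤ m ∧ M ≤ M' ∧ (m' < m ∨ M < M') ∧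
      ((m' : ℕ) : ℤ) - ((M' : ℕ) : ℤ) < ((m : ℕ) : ℤ) - ((M : ℕ) : ℤ) :=
  case1_remainder_indices_shrink_general t ht T k hk m M hm_min hM_max a ha_mem ha_min bm bM R hR m'
    M' hm'_min hm'_first hM'_max hM'_last
end

section
/- Suppose T is in case 1 (k < 0 and M < m) and that a = a_{mM}, where a_{mM} = (T_m − T_M)/(e^{k t_m} − e^{k t_M}). Then b_m = b_M and the exponential I_h(t) = a·e^{kt} + b_m interpolates all the data: T_i = a·e^{k t_i} + b_m for every index i; in particular ‖T − I_h(𝔱)‖_∞ = 0 and I_h(𝔱) is the best approximation of T in F_k. -/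
/-!
Write `E i = exp (k tᵢ)`, strictly decreasing in `i` since `k < 0`, and `f = a E + b_m`.
The choice `a = a_{mM}` makes `f` pass through both `(t_m, T_m)` and `(t_M, T_M)`, which forces
`b_m = b_M` and `a ≥ 0`, so `f` is non-increasing. Minimality of `a` among the slopes puts `f`
below the data before `m` and above it after `M`; monotonicity of `f` together with
`T_m ≤ T ≤ T_M` gives the two remaining one-sided bounds, so `f = T`.
-/

open Real

lemma strictAnti_exp_mul_of_neg {α : Type*} [Preorder α] {t : α → ℝ} (ht : StrictMono t)
    {k : ℝ} (hk : k < 0) : StrictAnti fun i => exp (k * t i) :=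
  fun _ _ hij => exp_lt_exp.mpr (mul_lt_mul_of_neg_left (ht hij) hk)

lemma sub_mul_eq_sub_mul_of_eq_div {a u v x y : ℝ} (hxy : x ≠ y) (ha : a = (u - v) / (x - y)) :
    u - a * x = v - a * y := by
  rw [ha]
  field_simp [sub_ne_zero.mpr hxy]
  ring

lemma add_sub_mul_le_of_le_div {a u v x y : ℝ} (hyx : y < x) (ha : a ≤ (u - v) / (x - y)) :
    a * x + (v - a * y) ≤ u := by
  have := (le_div_iff₀ (sub_pos.mpr hyx)).mp ha
  linarith

lemma le_add_sub_mul_of_le_div {a u v x y : ℝ} (hxy : x < y) (ha : a ≤ (u - v) / (x - y)) :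
    u ≤ a * x + (v - a * y) := by
  have := (le_div_iff_of_neg (sub_neg.mpr hxy)).mp ha
  linarith

lemma eq_of_antitone_of_le_of_le {α β : Type*} [LinearOrder α] [PartialOrder β] {f T : α → β}
    (hf : Antitone f) {m M : α} (hfm : f m = T m) (hfM : f M = T M)
    (hmin : ∀ i, T m ≤ T i) (hmax : ∀ i, T i ≤ T M)
    (hbelow : ∀ i, i < m → f i ≤ T i) (habove : ∀ j, M < j → T j ≤ f j) : f = T := by
  funext i
  apply le_antisymm
  · rcases lt_or_ge i m with him | hmi
    · exact hbelow i him
    · exact (hf hmi).trans (hfm.trans_le (hmin i))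
  · rcases lt_or_ge M i with hMi | hiM
    · exact habove i hMi
    · exact (hmax i).trans (hfM.symm.trans_le (hf hiM))

theorem case1_interpolation_when_a_eq_amM_general {n : ℕ}
    (t : Fin n → ℝ) (ht : StrictMono t) (T : Fin n → ℝ)
    (k : ℝ) (hk : k < 0)
    (m M : Fin n)
    (hm_min : ∀ i, T m ≤ T i)
    (hM_max : ∀ i, T i ≤ T M)
    (hMm : M < m)
    (a : ℝ)
    (ha_min :
      (∀ i, i < m → a ≤ (T i - T m) / (Real.exp (k * t i) - Real.exp (k * t m))) ∧
      (∀ j, M < j → a ≤ (T j - T M) / (Real.exp (k * t j) - Real.exp (k * t M))))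
    (ha_eq : a = (T m - T M) / (Real.exp (k * t m) - Real.exp (k * t M)))
    (bm bM : ℝ)
    (hbm : bm = T m - a * Real.exp (k * t m))
    (hbM : bM = T M - a * Real.exp (k * t M)) :
    bm = bM ∧
    (∀ i, T i = a * Real.exp (k * t i) + bm) ∧
    ‖T - (fun i => a * Real.exp (k * t i) + bm)‖ = 0 ∧
    ∀ a' b' : ℝ,
      ‖T - (fun i => a * Real.exp (k * t i) + bm)‖ ≤
        ‖T - (fun i => a' * Real.exp (k * t i) + b')‖ := by
  have hE := strictAnti_exp_mul_of_neg ht hk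
  have hEmM : exp (k * t m) < exp (k * t M) := hE hMm
  have hb : bm = bM := hbm.trans <| hbM ▸ sub_mul_eq_sub_mul_of_eq_div hEmM.ne ha_eq
  have ha : 0 ≤ a := ha_eq ▸ div_nonneg_of_nonpos (sub_nonpos.mpr (hm_min M)) (sub_neg.mpr hEmM).le
  have hinterp : (fun i => a * exp (k * t i) + bm) = T := by
    refine eq_of_antitone_of_le_of_le ((hE.antitone.const_mul ha).add_const bm)
      (by simp [hbm]) (by simp [hb, hbM]) hm_min hM_max (fun i hi => ?_) (fun j hj => ?_)
    · exact hbm ▸ add_sub_mul_le_of_le_div (hE hi) (ha_min.1 i hi)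
    · exact hb ▸ hbM ▸ le_add_sub_mul_of_le_div (hE hj) (ha_min.2 j hj)
  have hzero : T - (fun i => a * exp (k * t i) + bm) = 0 := sub_eq_zero.mpr hinterp.symm
  refine ⟨hb, fun i => (congrFun hinterp i).symm, by rw [hzero, norm_zero], fun a' b' => ?_⟩
  rw [hzero, norm_zero]
  exact norm_nonneg _

/-- In case 1 (`k < 0` and `M < m`), if `a = a_{mM}`, then
`b_m = b_M` and the exponential `I_h(t) = a·e^{kt} + b_m` interpolates all the
data: `T_i = a·e^{k t_i} + b_m` for every `i`.  In particular
`‖T − I_h(𝔱)‖_∞ = 0` and `I_h(𝔱)` is the best approximation of `T` in `F_k`.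
The norm on `Fin n → ℝ` is the sup-norm. -/
theorem case1_interpolation_when_a_eq_amM {n : ℕ}
    (t : Fin n → ℝ) (ht : StrictMono t) (T : Fin n → ℝ)
    (k : ℝ) (hk : k < 0)
    (m M : Fin n)
    (hm_min : ∀ i, T m ≤ T i) (hm_first : ∀ i, T i = T m → m ≤ i)
    (hM_max : ∀ i, T i ≤ T M) (hM_last : ∀ i, T i = T M → i ≤ M)
    (hMm : M < m)
    (a : ℝ)
    (ha_mem :
      (∃ i, i < m ∧ a = (T i - T m) / (Real.exp (k * t i) - Real.exp (k * t m))) ∨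
      (∃ j, M < j ∧ a = (T j - T M) / (Real.exp (k * t j) - Real.exp (k * t M))))
    (ha_min :
      (∀ i, i < m → a ≤ (T i - T m) / (Real.exp (k * t i) - Real.exp (k * t m))) ∧
      (∀ j, M < j → a ≤ (T j - T M) / (Real.exp (k * t j) - Real.exp (k * t M))))
    (ha_eq : a = (T m - T M) / (Real.exp (k * t m) - Real.exp (k * t M)))
    (bm bM : ℝ)
    (hbm : bm = T m - a * Real.exp (k * t m))
    (hbM : bM = T M - a * Real.exp (k * t M)) :
    bm = bM ∧
    (∀ i, T i = a * Real.exp (k * t i) + bm) ∧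
    ‖T - (fun i => a * Real.exp (k * t i) + bm)‖ = 0 ∧
    ∀ a' b' : ℝ,
      ‖T - (fun i => a * Real.exp (k * t i) + bm)‖ ≤
        ‖T - (fun i => a' * Real.exp (k * t i) + b')‖ :=
  case1_interpolation_when_a_eq_amM_general t ht T k hk m M hm_min hM_max hMm a ha_min ha_eq bm bM
    hbm hbM
end

section
/- (Optimality criterion used in the successive remainders method.) Fix k ∈ ℝ and let f ∈ F̄_k be such that the remainder R = T − f(𝔱) is alternated and satisfies max_i R_i = −min_i R_i. Then f(𝔱) is a best approximation of T in F_k: ‖T − f(𝔱)‖_∞ ≤ ‖T − g(𝔱)‖_∞ for every g ∈ F̄_k. -/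
/-!
Suppose some `g ∈ F̄_k` did strictly better than `f`, and let `E = max R = -min R = ‖R‖`.
Then `d = g - f`, which again lies in `F̄_k`, satisfies `‖R - d‖ < E`, so `d` has the sign of `R`
wherever `R = ±E`. By alternation, `d` takes the signs `+, -, +` (or `-, +, -`) at three
increasing instants. But `d(t) = a·e^{kt} + b` is an affine function of the monotone quantity
`e^{kt}`, so it changes sign at most once.
-/

open Real

lemma not_pos_neg_pos_of_mul_sub_nonpos {a b u₁ u₂ u₃ : ℝ} (hu : (u₁ - u₂) * (u₃ - u₂) ≤ 0) :
    ¬ (0 < a * u₁ + b ∧ a * u₂ + b < 0 ∧ 0 < a * u₃ + b) := by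
  rintro ⟨h₁, h₂, h₃⟩
  have hpos : 0 < (a * (u₁ - u₂)) * (a * (u₃ - u₂)) := mul_pos (by linarith) (by linarith)
  nlinarith [mul_nonpos_of_nonneg_of_nonpos (sq_nonneg a) hu]

lemma exp_mul_sub_mul_exp_mul_sub_nonpos (k : ℝ) {x₁ x₂ x₃ : ℝ} (h₁₂ : x₁ < x₂)
    (h₂₃ : x₂ < x₃) :
    (exp (k * x₁) - exp (k * x₂)) * (exp (k * x₃) - exp (k * x₂)) ≤ 0 := by
  rcases le_total 0 k with hk | hk
  · exact mul_nonpos_of_nonpos_of_nonneg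
      (sub_nonpos.2 (exp_le_exp.2 (mul_le_mul_of_nonneg_left h₁₂.le hk)))
      (sub_nonneg.2 (exp_le_exp.2 (mul_le_mul_of_nonneg_left h₂₃.le hk)))
  · exact mul_nonpos_of_nonneg_of_nonpos
      (sub_nonneg.2 (exp_le_exp.2 (mul_le_mul_of_nonpos_left h₁₂.le hk)))
      (sub_nonpos.2 (exp_le_exp.2 (mul_le_mul_of_nonpos_left h₂₃.le hk)))

lemma not_pos_neg_pos_exp_affine (a b k : ℝ) {x₁ x₂ x₃ : ℝ} (h₁₂ : x₁ < x₂) (h₂₃ : x₂ < x₃) :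
    ¬ (0 < a * exp (k * x₁) + b ∧ a * exp (k * x₂) + b < 0 ∧ 0 < a * exp (k * x₃) + b) :=
  not_pos_neg_pos_of_mul_sub_nonpos (exp_mul_sub_mul_exp_mul_sub_nonpos k h₁₂ h₂₃)

section SupNorm

variable {ι : Type*} [Fintype ι] {R d : ι → ℝ} {E : ℝ}

lemma abs_sub_apply_lt_of_norm_sub_lt (h : ‖R - d‖ < E) (i : ι) : |R i - d i| < E :=
  (norm_le_pi_norm (R - d) i).trans_lt h

lemma pos_of_norm_sub_lt_of_le (h : ‖R - d‖ < E) {i : ι} (hi : E ≤ R i) : 0 < d i := by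
  linarith [le_abs_self (R i - d i), abs_sub_apply_lt_of_norm_sub_lt h i]

lemma neg_of_norm_sub_lt_of_le (h : ‖R - d‖ < E) {i : ι} (hi : R i ≤ -E) : d i < 0 := by
  linarith [neg_abs_le (R i - d i), abs_sub_apply_lt_of_norm_sub_lt h i]

end SupNorm

lemma not_norm_sub_exp_affine_lt_of_alternation {n : ℕ} {t : Fin n → ℝ} (ht : StrictMono t)
    {R : Fin n → ℝ} {k a b E : ℝ}
    (hlt : ‖R - fun i => a * exp (k * t i) + b‖ < E) {p q r : Fin n} (hpq : p < q) (hqr : q < r)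
    (hp : E ≤ R p) (hq : R q ≤ -E) (hr : E ≤ R r) : False :=
  not_pos_neg_pos_exp_affine a b k (ht hpq) (ht hqr)
    ⟨(pos_of_norm_sub_lt_of_le hlt hp :), (neg_of_norm_sub_lt_of_le hlt hq :),
      (pos_of_norm_sub_lt_of_le hlt hr :)⟩

lemma not_norm_sub_exp_affine_lt_of_alternation' {n : ℕ} {t : Fin n → ℝ} (ht : StrictMono t)
    {R : Fin n → ℝ} {k a b E : ℝ}
    (hlt : ‖R - fun i => a * exp (k * t i) + b‖ < E) {p q r : Fin n} (hpq : p < q) (hqr : q < r)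
    (hp : R p ≤ -E) (hq : E ≤ R q) (hr : R r ≤ -E) : False := by
  refine not_norm_sub_exp_affine_lt_of_alternation (R := -R) (k := k) (a := -a) (b := -b) (E := E)
    ht ?_ hpq hqr (le_neg.1 hp) (neg_le_neg hq) (le_neg.1 hr)
  refine Eq.trans_lt ?_ hlt
  rw [← norm_neg]
  congr 1
  funext l
  simp only [Pi.neg_apply, Pi.sub_apply]
  ring

/-- Optimality criterion: Fix `k ∈ ℝ` and let
`f(t) = A·e^{kt} + B ∈ F̄_k` be such that the remainder `R = T − f(𝔱)` is
alternated and satisfies `max R = −min R`.  Then `f(𝔱)` is a best approximation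
of `T` in `F_k`: `‖T − f(𝔱)‖_∞ ≤ ‖T − g(𝔱)‖_∞` for every `g ∈ F̄_k`.
The norm on `Fin n → ℝ` is the sup-norm. -/
theorem alternated_equioscillation_is_best {n : ℕ}
    (t : Fin n → ℝ) (ht : StrictMono t) (T : Fin n → ℝ)
    (k : ℝ) (A B : ℝ)
    (R : Fin n → ℝ)
    (hR : R = fun i => T i - (A * Real.exp (k * t i) + B))
    (halt :
      (∃ M₁ m₁ M₂ : Fin n, M₁ < m₁ ∧ m₁ < M₂ ∧
        (∀ i, R i ≤ R M₁) ∧ R M₂ = R M₁ ∧ (∀ i, R m₁ ≤ R i)) ∨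
      (∃ m₁ M₁ m₂ : Fin n, m₁ < M₁ ∧ M₁ < m₂ ∧
        (∀ i, R m₁ ≤ R i) ∧ R m₂ = R m₁ ∧ (∀ i, R i ≤ R M₁)))
    (hsym : ∃ i j : Fin n, (∀ l, R l ≤ R i) ∧ (∀ l, R j ≤ R l) ∧ R i = -(R j)) :
    ∀ A' B' : ℝ,
      ‖T - (fun i => A * Real.exp (k * t i) + B)‖ ≤
        ‖T - (fun i => A' * Real.exp (k * t i) + B')‖ := by
  intro A' B'
  obtain ⟨i, j, hmax, hmin, hij⟩ := hsym
  have hnorm : ‖R‖ ≤ R i := (pi_norm_le_iff_of_nonneg (by linarith [hmin i])).2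
    fun l => abs_le.2 ⟨by linarith [hmin l], hmax l⟩
  have hf : T - (fun i => A * exp (k * t i) + B) = R := by rw [hR]; rfl
  have hg : T - (fun i => A' * exp (k * t i) + B') =
      R - fun i => (A' - A) * exp (k * t i) + (B' - B) := by
    rw [hR]; funext l; simp only [Pi.sub_apply]; ring
  rw [hf, hg]
  by_contra! hlt
  replace hlt := hlt.trans_le hnorm
  rcases halt with ⟨M₁, m₁, M₂, h₁, h₂, hM, hMM, hm⟩ | ⟨m₁, M₁, m₂, h₁, h₂, hm, hmm, hM⟩
  · exact not_norm_sub_exp_affine_lt_of_alternation ht hlt h₁ h₂ (hM i)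
      (by linarith [hm j]) (hMM ▸ hM i)
  · exact not_norm_sub_exp_affine_lt_of_alternation' ht hlt h₁ h₂ (by linarith [hm j]) (hM i)
      (by linarith [hm j])
end

section
/- (Successive remainders method terminates at the best approximation.) Suppose T is in case 1 for k < 0 (M < m). Define recursively R_0 = T and, as long as R_j is in case 1 (the largest maximizer index of R_j is smaller than its smallest minimizer index), let g_j be the exponential I_h constructed from the data R_j (that is, g_j(t) = a_j·e^{kt} + (b_{m,j} + b_{M,j})/2 with a_j, b_{m,j}, b_{M,j} built from R_j as in the constructive method) and set R_{j+1} = R_j − g_j(𝔱). Then there exists N with 1 ≤ N ≤ m − M such that R_N is not in case 1, the recursion stops, and the function f = g_0 + g_1 + ⋯ + g_{N−1} ∈ F̄_k satisfies that f(𝔱) is a best approximation of T in F_k. -/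
/-- `M` is the largest index where `v` attains its maximum. -/
def IsLastMax {n : ℕ} (v : Fin n → ℝ) (M : Fin n) : Prop :=
  (∀ i, v i ≤ v M) ∧ (∀ i, v i = v M → i ≤ M)

/-- `m` is the smallest index where `v` attains its minimum. -/
def IsFirstMin {n : ℕ} (v : Fin n → ℝ) (m : Fin n) : Prop :=
  (∀ i, v m ≤ v i) ∧ (∀ i, v i = v m → m ≤ i)

/-- `v` is in case 1: the largest maximizer index of `v` is smaller than its
smallest minimizer index. -/
def Case1 {n : ℕ} (v : Fin n → ℝ) : Prop :=
  ∃ M m : Fin n, IsLastMax v M ∧ IsFirstMin v m ∧ M < m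

/-- `g` is the exponential `I_h(t) = a·e^{kt} + (b_m + b_M)/2` constructed from
the data `v` (in case 1) by the constructive method: `M` is the largest
maximizer and `m` the smallest minimizer of `v`,
`a = min({a_{im} : i < m} ∪ {a_{jM} : j > M})`, `b_m = v_m − a·e^{k t_m}` and
`b_M = v_M − a·e^{k t_M}`. -/
def ConstructiveStep {n : ℕ} (t : Fin n → ℝ) (k : ℝ)
    (v : Fin n → ℝ) (g : ℝ → ℝ) : Prop :=
  ∃ M m : Fin n, ∃ a : ℝ,
    IsLastMax v M ∧ IsFirstMin v m ∧ M < m ∧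
    ((∃ i, i < m ∧ a = (v i - v m) / (Real.exp (k * t i) - Real.exp (k * t m))) ∨
     (∃ j, M < j ∧ a = (v j - v M) / (Real.exp (k * t j) - Real.exp (k * t M)))) ∧
    (∀ i, i < m → a ≤ (v i - v m) / (Real.exp (k * t i) - Real.exp (k * t m))) ∧
    (∀ j, M < j → a ≤ (v j - v M) / (Real.exp (k * t j) - Real.exp (k * t M))) ∧
    g = fun s => a * Real.exp (k * s) +
      ((v m - a * Real.exp (k * t m)) + (v M - a * Real.exp (k * t M))) / 2

lemma IsLastMax.unique {n : ℕ} {v : Fin n → ℝ} {M₁ M₂ : Fin n}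
    (h₁ : IsLastMax v M₁) (h₂ : IsLastMax v M₂) : M₁ = M₂ :=
  le_antisymm (h₂.2 _ (le_antisymm (h₂.1 M₁) (h₁.1 M₂)))
    (h₁.2 _ (le_antisymm (h₁.1 M₂) (h₂.1 M₁)))

lemma IsFirstMin.unique {n : ℕ} {v : Fin n → ℝ} {m₁ m₂ : Fin n}
    (h₁ : IsFirstMin v m₁) (h₂ : IsFirstMin v m₂) : m₁ = m₂ :=
  le_antisymm (h₁.2 _ (le_antisymm (h₂.1 m₁) (h₁.1 m₂)))
    (h₂.2 _ (le_antisymm (h₁.1 m₂) (h₂.1 m₁)))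

lemma exists_isLastMax {n : ℕ} (hn : 0 < n) (v : Fin n → ℝ) : ∃ M, IsLastMax v M := by
  classical
  have hne : (Finset.univ : Finset (Fin n)).Nonempty := ⟨⟨0, hn⟩, Finset.mem_univ _⟩
  obtain ⟨i0, -, hi0⟩ := Finset.exists_max_image Finset.univ v hne
  set S := Finset.univ.filter (fun i => v i = v i0) with hS
  have hSne : S.Nonempty := ⟨i0, by simp [hS]⟩
  have hmem := S.max'_mem hSne
  have hval : v (S.max' hSne) = v i0 := by
    simp only [hS, Finset.mem_filter] at hmem; exact hmem.2
  refine ⟨S.max' hSne, ?_, ?_⟩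
  · intro i; rw [hval]; exact hi0 i (Finset.mem_univ i)
  · intro i hi
    apply S.le_max'
    simp only [hS, Finset.mem_filter]
    exact ⟨Finset.mem_univ i, hi.trans hval⟩

lemma exists_isFirstMin {n : ℕ} (hn : 0 < n) (v : Fin n → ℝ) : ∃ m, IsFirstMin v m := by
  classical
  have hne : (Finset.univ : Finset (Fin n)).Nonempty := ⟨⟨0, hn⟩, Finset.mem_univ _⟩
  obtain ⟨i0, -, hi0⟩ := Finset.exists_min_image Finset.univ v hne
  set S := Finset.univ.filter (fun i => v i = v i0) with hS
  have hSne : S.Nonempty := ⟨i0, by simp [hS]⟩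
  have hmem := S.min'_mem hSne
  have hval : v (S.min' hSne) = v i0 := by
    simp only [hS, Finset.mem_filter] at hmem; exact hmem.2
  refine ⟨S.min' hSne, ?_, ?_⟩
  · intro i; rw [hval]; exact hi0 i (Finset.mem_univ i)
  · intro i hi
    apply S.min'_le
    simp only [hS, Finset.mem_filter]
    exact ⟨Finset.mem_univ i, hi.trans hval⟩

lemma step_main {n : ℕ} {t : Fin n → ℝ} (ht : StrictMono t) {k : ℝ} (hk : k < 0)
    {v : Fin n → ℝ} {g : ℝ → ℝ} (hc : ConstructiveStep t k v g) :
    ∃ M m : Fin n, IsLastMax v M ∧ IsFirstMin v m ∧ M < m ∧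
      (∀ i, v i - g (t i) ≤ v M - g (t M)) ∧
      (∀ i, v m - g (t m) ≤ v i - g (t i)) ∧
      (v M - g (t M)) + (v m - g (t m)) = 0 ∧
      (∃ i, (i < m ∧ v i - g (t i) = v m - g (t m)) ∨
            (M < i ∧ v i - g (t i) = v M - g (t M))) := by
  obtain ⟨M, m, a, hM, hm, hMm, hmem, hle1, hle2, hg⟩ := hc
  have hE : ∀ {i j : Fin n}, i < j → Real.exp (k * t j) < Real.exp (k * t i) :=
    fun h => Real.exp_lt_exp.2 (mul_lt_mul_of_neg_left (ht h) hk)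
  have hE' : ∀ {i j : Fin n}, i ≤ j → Real.exp (k * t j) ≤ Real.exp (k * t i) := by
    intro i j h
    rcases eq_or_lt_of_le h with rfl | h
    · exact le_refl _
    · exact (hE h).le
  have ha0 : 0 ≤ a := by
    rcases hmem with ⟨i, him, rfl⟩ | ⟨j, hMj, rfl⟩
    · exact div_nonneg (by linarith [hm.1 i]) (by linarith [hE him])
    · rw [div_nonneg_iff]
      exact Or.inr ⟨by linarith [hM.1 j], by linarith [hE hMj]⟩
  have key1 : ∀ i, v i - a * Real.exp (k * t i) ≤ v M - a * Real.exp (k * t M) := by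
    intro i
    rcases le_or_gt i M with h | h
    · have h1 : v i ≤ v M := hM.1 i
      have h3 : a * Real.exp (k * t M) ≤ a * Real.exp (k * t i) :=
        mul_le_mul_of_nonneg_left (hE' h) ha0
      linarith
    · have hD : Real.exp (k * t i) - Real.exp (k * t M) < 0 := by linarith [hE h]
      have h2 := (le_div_iff_of_neg hD).1 (hle2 i h)
      nlinarith [h2]
  have key2 : ∀ i, v m - a * Real.exp (k * t m) ≤ v i - a * Real.exp (k * t i) := by
    intro i
    rcases lt_or_ge i m with h | h
    · have hD : 0 < Real.exp (k * t i) - Real.exp (k * t m) := by linarith [hE h]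
      have h2 := (le_div_iff₀ hD).1 (hle1 i h)
      nlinarith [h2]
    · have h1 : v m ≤ v i := hm.1 i
      have h3 : a * Real.exp (k * t i) ≤ a * Real.exp (k * t m) :=
        mul_le_mul_of_nonneg_left (hE' h) ha0
      linarith
  have key3 : ∃ i, (i < m ∧ v i - a * Real.exp (k * t i) = v m - a * Real.exp (k * t m)) ∨
      (M < i ∧ v i - a * Real.exp (k * t i) = v M - a * Real.exp (k * t M)) := by
    rcases hmem with ⟨i, him, hai⟩ | ⟨j, hMj, haj⟩
    · refine ⟨i, Or.inl ⟨him, ?_⟩⟩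
      have hD : Real.exp (k * t i) - Real.exp (k * t m) ≠ 0 :=
        sub_ne_zero.2 (ne_of_gt (hE him))
      have hx : a * (Real.exp (k * t i) - Real.exp (k * t m)) = v i - v m := by
        rw [hai]; exact div_mul_cancel₀ _ hD
      linear_combination -hx
    · refine ⟨j, Or.inr ⟨hMj, ?_⟩⟩
      have hD : Real.exp (k * t j) - Real.exp (k * t M) ≠ 0 :=
        sub_ne_zero.2 (ne_of_lt (hE hMj))
      have hx : a * (Real.exp (k * t j) - Real.exp (k * t M)) = v j - v M := by
        rw [haj]; exact div_mul_cancel₀ _ hD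
      linear_combination -hx
  subst hg
  refine ⟨M, m, hM, hm, hMm, ?_, ?_, ?_, ?_⟩
  · intro i; simp only []; linarith [key1 i]
  · intro i; simp only []; linarith [key2 i]
  · simp only []; ring
  · obtain ⟨i, hi | hi⟩ := key3
    · exact ⟨i, Or.inl ⟨hi.1, by simp only []; linarith [hi.2]⟩⟩
    · exact ⟨i, Or.inr ⟨hi.1, by simp only []; linarith [hi.2]⟩⟩

/-- Successive remainders method terminates at the best
approximation: Suppose `T` is in case 1 for `k < 0` (`M < m`), a best
approximation of `T` in `F_k` exists, and let `R_0 = T` and, as long as `R_j`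
is in case 1, `g_j` be the exponential constructed from `R_j` by the
constructive method and `R_{j+1} = R_j − g_j(𝔱)`.  Then there is `N` with
`1 ≤ N ≤ m − M` such that `R_N` is not in case 1 (the recursion stops) and
`f = g_0 + ⋯ + g_{N−1}` belongs to `F̄_k` and `f(𝔱)` is a best approximation
of `T` in `F_k`.  The norm on `Fin n → ℝ` is the sup-norm. -/
theorem successive_remainders_terminates_at_best {n : ℕ}
    (t : Fin n → ℝ) (ht : StrictMono t) (T : Fin n → ℝ)
    (k : ℝ) (hk : k < 0)
    (m M : Fin n)
    (hM : IsLastMax T M) (hm : IsFirstMin T m) (hMm : M < m)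
    (hbest : ∃ A B : ℝ, ∀ A' B' : ℝ,
      ‖T - (fun i => A * Real.exp (k * t i) + B)‖ ≤
        ‖T - (fun i => A' * Real.exp (k * t i) + B')‖)
    (R : ℕ → Fin n → ℝ) (g : ℕ → ℝ → ℝ)
    (hR0 : R 0 = T)
    (hstep : ∀ j, Case1 (R j) →
      ConstructiveStep t k (R j) (g j) ∧
      R (j + 1) = fun i => R j i - g j (t i)) :
    ∃ N : ℕ, 1 ≤ N ∧ N ≤ (m : ℕ) - (M : ℕ) ∧
      (∀ j < N, Case1 (R j)) ∧ ¬ Case1 (R N) ∧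
      (∃ A B : ℝ, ∀ s : ℝ,
        (∑ j ∈ Finset.range N, g j) s = A * Real.exp (k * s) + B) ∧
      ∀ A' B' : ℝ,
        ‖T - (fun i => (∑ j ∈ Finset.range N, g j) (t i))‖ ≤
          ‖T - (fun i => A' * Real.exp (k * t i) + B')‖ := by
  classical
  have hn : 0 < n := M.pos
  -- decreasing-gap invariant
  have inv : ∀ j : ℕ, (∀ i : ℕ, i ≤ j → Case1 (R i)) →
      ∃ M' m' : Fin n, IsLastMax (R j) M' ∧ IsFirstMin (R j) m' ∧ M' < m' ∧
        ((m' : ℕ) : ℤ) - ((M' : ℕ) : ℤ) + (j : ℤ) ≤ ((m : ℕ) : ℤ) - ((M : ℕ) : ℤ) := by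
    intro j
    induction j with
    | zero =>
      intro _
      exact ⟨M, m, by rw [hR0]; exact hM, by rw [hR0]; exact hm, hMm, by simp⟩
    | succ j ih =>
      intro h
      obtain ⟨M', m', hM', hm', hlt', hbd⟩ := ih (fun i hi => h i (Nat.le_succ_of_le hi))
      obtain ⟨hcs, hRs⟩ := hstep j (h j (Nat.le_succ j))
      obtain ⟨M₂, m₂, hM₂, hm₂, hlt₂, hmaxw, hminw, hsumw, hattw⟩ := step_main ht hk hcs
      have eM : M₂ = M' := hM₂.unique hM'
      have em : m₂ = m' := hm₂.unique hm'
      obtain ⟨M₃, m₃, hM₃, hm₃, hlt₃⟩ := h (j+1) le_rfl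
      have hR1 : ∀ i, R (j+1) i = R j i - g j (t i) := fun i => by rw [hRs]
      have hmax' : ∀ i, R (j+1) i ≤ R (j+1) M₂ := by
        intro i; rw [hR1, hR1]; exact hmaxw i
      have hmin' : ∀ i, R (j+1) m₂ ≤ R (j+1) i := by
        intro i; rw [hR1, hR1]; exact hminw i
      have hMle : M₂ ≤ M₃ := hM₃.2 M₂ (le_antisymm (hM₃.1 M₂) (hmax' M₃))
      have eqm : R (j+1) m₂ = R (j+1) m₃ := le_antisymm (hmin' m₃) (hm₃.1 m₂)
      have hmle : m₃ ≤ m₂ := hm₃.2 m₂ eqm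
      have hstrict : m₃ < m₂ ∨ M₂ < M₃ := by
        obtain ⟨i, hi | hi⟩ := hattw
        · left
          have hieq : R (j+1) i = R (j+1) m₃ := by
            rw [hR1 i, hi.2, ← hR1 m₂]; exact eqm
          exact lt_of_le_of_lt (hm₃.2 i hieq) hi.1
        · right
          have eqM : R (j+1) M₂ = R (j+1) M₃ := le_antisymm (hM₃.1 M₂) (hmax' M₃)
          have hieq : R (j+1) i = R (j+1) M₃ := by
            rw [hR1 i, hi.2, ← hR1 M₂]; exact eqM
          exact lt_of_lt_of_le hi.1 (hM₃.2 i hieq)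
      refine ⟨M₃, m₃, hM₃, hm₃, hlt₃, ?_⟩
      have c1 : (m₃ : ℕ) ≤ (m₂ : ℕ) := hmle
      have c2 : (M₂ : ℕ) ≤ (M₃ : ℕ) := hMle
      have c3 : (m₃ : ℕ) < (m₂ : ℕ) ∨ (M₂ : ℕ) < (M₃ : ℕ) := by
        rcases hstrict with h' | h'
        · exact Or.inl h'
        · exact Or.inr h'
      have c4 : (M₂ : ℕ) = (M' : ℕ) := by rw [eM]
      have c5 : (m₂ : ℕ) = (m' : ℕ) := by rw [em]
      omega
  have hCT : Case1 (R 0) := by rw [hR0]; exact ⟨M, m, hM, hm, hMm⟩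
  have hterm : ∃ j, ¬ Case1 (R j) ∧ j ≤ (m : ℕ) - (M : ℕ) := by
    by_contra hco
    push_neg at hco
    have hall : ∀ i : ℕ, i ≤ (m : ℕ) - (M : ℕ) → Case1 (R i) := by
      intro i hi
      by_contra hni
      exact absurd hi (not_le.2 (hco i hni))
    obtain ⟨M', m', _, _, hlt', hbd⟩ := inv ((m : ℕ) - (M : ℕ)) hall
    have h1 : (M' : ℕ) < (m' : ℕ) := hlt'
    have h2 : (M : ℕ) < (m : ℕ) := hMm
    omega
  have hex : ∃ j, ¬ Case1 (R j) := ⟨hterm.choose, hterm.choose_spec.1⟩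
  set N := Nat.find hex with hNdef
  have hNspec : ¬ Case1 (R N) := Nat.find_spec hex
  have hCase : ∀ j < N, Case1 (R j) := fun j hj => not_not.1 (Nat.find_min hex hj)
  have hN1 : 1 ≤ N := by
    rcases Nat.eq_zero_or_pos N with h0 | h
    · rw [h0] at hNspec; exact absurd hCT hNspec
    · exact h
  have hNle : N ≤ (m : ℕ) - (M : ℕ) :=
    le_trans (Nat.find_min' hex hterm.choose_spec.1) hterm.choose_spec.2
  -- step at N-1
  obtain ⟨N', hN'⟩ : ∃ N', N' + 1 = N := ⟨N - 1, by omega⟩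
  obtain ⟨hcs, hRs⟩ := hstep N' (hCase N' (by omega))
  rw [hN'] at hRs
  obtain ⟨M₂, m₂, hM₂, hm₂, hlt₂, hmaxw, hminw, hsumw, hattw⟩ := step_main ht hk hcs
  have hR1 : ∀ i, R N i = R N' i - g N' (t i) := fun i => by rw [hRs]
  have hmax : ∀ i, R N i ≤ R N M₂ := by intro i; rw [hR1, hR1]; exact hmaxw i
  have hmin : ∀ i, R N m₂ ≤ R N i := by intro i; rw [hR1, hR1]; exact hminw i
  have hsum : R N M₂ + R N m₂ = 0 := by rw [hR1, hR1]; exact hsumw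
  -- exponential form of the sum
  have hform : ∀ j : ℕ, ∃ a c : ℝ, j < N → g j = fun s => a * Real.exp (k * s) + c := by
    intro j
    by_cases hj : j < N
    · obtain ⟨hcs', _⟩ := hstep j (hCase j hj)
      obtain ⟨Ma, ma, a, _, _, _, _, _, _, hg⟩ := hcs'
      exact ⟨a, _, fun _ => hg⟩
    · exact ⟨0, 0, fun h' => absurd h' hj⟩
  choose aa cc haa using hform
  set A : ℝ := ∑ j ∈ Finset.range N, aa j with hA
  set B : ℝ := ∑ j ∈ Finset.range N, cc j with hB
  have hfAB : ∀ s : ℝ, (∑ j ∈ Finset.range N, g j) s = A * Real.exp (k * s) + B := by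
    intro s
    rw [Finset.sum_apply]
    have h1 : ∑ j ∈ Finset.range N, g j s
        = ∑ j ∈ Finset.range N, (aa j * Real.exp (k * s) + cc j) :=
      Finset.sum_congr rfl (fun j hj => by rw [haa j (Finset.mem_range.1 hj)])
    rw [h1, Finset.sum_add_distrib, ← Finset.sum_mul]
  -- telescoping
  have htel : ∀ p, p ≤ N → ∀ i, R p i = T i - ∑ j ∈ Finset.range p, g j (t i) := by
    intro p
    induction p with
    | zero => intro _ i; simp [hR0]
    | succ p ih =>
      intro hp i
      obtain ⟨_, hRs'⟩ := hstep p (hCase p (by omega))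
      rw [hRs']
      simp only []
      rw [ih (by omega) i, Finset.sum_range_succ]
      ring
  have hRNtel : ∀ i, R N i = T i - (∑ j ∈ Finset.range N, g j) (t i) := by
    intro i; rw [Finset.sum_apply]; exact htel N le_rfl i
  set E : ℝ := R N M₂ with hEdef
  have hE0 : 0 ≤ E := by have := hmax m₂; linarith [hsum]
  refine ⟨N, hN1, hNle, hCase, hNspec, ⟨A, B, hfAB⟩, ?_⟩
  intro A' B'
  have step1 : ‖T - (fun i => (∑ j ∈ Finset.range N, g j) (t i))‖ ≤ E := by
    rw [pi_norm_le_iff_of_nonneg hE0]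
    intro i
    have hTF : (T - (fun i => (∑ j ∈ Finset.range N, g j) (t i))) i = R N i := by
      rw [Pi.sub_apply, hRNtel i]
    rw [hTF, Real.norm_eq_abs, abs_le]
    exact ⟨by linarith [hmin i, hsum], hmax i⟩
  have step2 : E ≤ ‖T - (fun i => A' * Real.exp (k * t i) + B')‖ := by
    by_contra hcon
    push_neg at hcon
    have hEpos : 0 < E := lt_of_le_of_lt (norm_nonneg _) hcon
    set H : Fin n → ℝ := fun i => A' * Real.exp (k * t i) + B' with hH
    have hbound : ∀ i, -E < T i - H i ∧ T i - H i < E := by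
      intro i
      have h1 : ‖(T - H) i‖ ≤ ‖T - H‖ := norm_le_pi_norm (T - H) i
      rw [Pi.sub_apply, Real.norm_eq_abs] at h1
      exact abs_lt.1 (lt_of_le_of_lt h1 hcon)
    have hdpos : ∀ i : Fin n, R N i = E →
        0 < (A' - A) * Real.exp (k * t i) + (B' - B) := by
      intro i hi
      have h1 := (hbound i).2
      have h2 : T i - (A * Real.exp (k * t i) + B) = E := by
        rw [← hfAB (t i), ← hRNtel i]; exact hi
      simp only [hH] at h1
      nlinarith [h1, h2]
    have hdneg : ∀ i : Fin n, R N i = -E →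
        (A' - A) * Real.exp (k * t i) + (B' - B) < 0 := by
      intro i hi
      have h1 := (hbound i).1
      have h2 : T i - (A * Real.exp (k * t i) + B) = -E := by
        rw [← hfAB (t i), ← hRNtel i]; exact hi
      simp only [hH] at h1
      nlinarith [h1, h2]
    have key : ∀ p q r : Fin n, p < q → q < r →
        ((R N p = E ∧ R N q = -E ∧ R N r = E) ∨
         (R N p = -E ∧ R N q = E ∧ R N r = -E)) → False := by
      intro p q r hpq hqr hpat
      have hEpq : Real.exp (k * t q) < Real.exp (k * t p) :=
        Real.exp_lt_exp.2 (mul_lt_mul_of_neg_left (ht hpq) hk)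
      have hEqr : Real.exp (k * t r) < Real.exp (k * t q) :=
        Real.exp_lt_exp.2 (mul_lt_mul_of_neg_left (ht hqr) hk)
      set α : ℝ := A' - A with hα
      set β : ℝ := B' - B with hβ
      rcases hpat with ⟨h1, h2, h3⟩ | ⟨h1, h2, h3⟩
      · have d1 := hdpos p h1
        have d2 := hdneg q h2
        have d3 := hdpos r h3
        rcases le_or_gt α 0 with hs | hs
        · have : α * Real.exp (k * t p) ≤ α * Real.exp (k * t q) :=
            mul_le_mul_of_nonpos_left hEpq.le hs
          linarith
        · have : α * Real.exp (k * t r) < α * Real.exp (k * t q) :=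
            (mul_lt_mul_iff_right₀ hs).2 hEqr
          linarith
      · have d1 := hdneg p h1
        have d2 := hdpos q h2
        have d3 := hdneg r h3
        rcases le_or_gt 0 α with hs | hs
        · have : α * Real.exp (k * t q) ≤ α * Real.exp (k * t p) :=
            mul_le_mul_of_nonneg_left hEpq.le hs
          linarith
        · have : α * Real.exp (k * t q) < α * Real.exp (k * t r) :=
            mul_lt_mul_of_neg_left hEqr hs
          linarith
    obtain ⟨M₃, hM₃⟩ := exists_isLastMax hn (R N)
    obtain ⟨m₃, hm₃⟩ := exists_isFirstMin hn (R N)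
    have hnc : ¬ (M₃ < m₃) := fun h' => hNspec ⟨M₃, m₃, hM₃, hm₃, h'⟩
    have eqM₃ : R N M₃ = E := le_antisymm (hmax M₃) (hM₃.1 M₂)
    have eqm₂ : R N m₂ = -E := by linarith [hsum]
    have eqm₃ : R N m₃ = -E := by
      have ha : R N m₃ ≤ R N m₂ := hm₃.1 m₂
      have hb : R N m₂ ≤ R N m₃ := hmin m₃
      linarith
    have hm₃M₃ : m₃ < M₃ := by
      rcases lt_or_eq_of_le (le_of_not_gt hnc) with h' | h'
      · exact h'
      · rw [h'] at eqm₃; rw [eqM₃] at eqm₃; linarith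
    rcases lt_or_ge m₃ M₂ with hx | hx
    · exact key m₃ M₂ m₂ hx hlt₂ (Or.inr ⟨eqm₃, rfl, eqm₂⟩)
    · have hne : M₂ ≠ m₃ := by
        intro h'
        rw [← h'] at eqm₃
        linarith
      exact key M₂ m₃ M₃ (lt_of_le_of_ne hx (Ne.symm hne).symm ) hm₃M₃ (Or.inl ⟨rfl, eqm₃, eqM₃⟩)
  exact le_trans step1 step2
end

section
/- Suppose T is in case 1 (k < 0 and M < m). Then the exponential I_h satisfies I_h(t_M) = h(t_M) + (a/2)·(e^{k t_M} − e^{k t_m}), and consequently I_h(t_M) > h(t_M). -/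
/-! The minimum `m` is the first and the maximum `M` the last extremal index, so every candidate
slope `a_{im}` or `a_{jM}` compares a strict change of `T` with a change of the decreasing
function `e^{kt}` in the same direction; hence `a > 0`. Substituting `b_m, b_M` gives the
identity, and `t_M < t_m` with `k < 0` makes `e^{k t_M} − e^{k t_m}` positive. -/

open Real

lemma exp_mul_lt_exp_mul_of_neg {k s u : ℝ} (hk : k < 0) (hsu : s < u) :
    exp (k * u) < exp (k * s) :=
  exp_lt_exp.mpr (mul_lt_mul_of_neg_left hsu hk)

lemma exp_chord_slope_pos {k s u x y : ℝ} (hk : k < 0) (hsu : s < u) (hyx : y < x) :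
    0 < (x - y) / (exp (k * s) - exp (k * u)) :=
  div_pos (sub_pos.mpr hyx) (sub_pos.mpr (exp_mul_lt_exp_mul_of_neg hk hsu))

theorem case1_Ih_above_h_at_tM_general {n : ℕ}
    (t : Fin n → ℝ) (ht : StrictMono t) (T : Fin n → ℝ)
    (k : ℝ) (hk : k < 0)
    (m M : Fin n)
    (hm_min : ∀ i, T m ≤ T i) (hm_first : ∀ i, T i = T m → m ≤ i)
    (hM_max : ∀ i, T i ≤ T M) (hM_last : ∀ i, T i = T M → i ≤ M)
    (hMm : M < m)
    (a : ℝ)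
    (ha_mem :
      (∃ i, i < m ∧ a = (T i - T m) / (Real.exp (k * t i) - Real.exp (k * t m))) ∨
      (∃ j, M < j ∧ a = (T j - T M) / (Real.exp (k * t j) - Real.exp (k * t M))))
    (bm bM : ℝ)
    (hbm : bm = T m - a * Real.exp (k * t m))
    (hbM : bM = T M - a * Real.exp (k * t M)) :
    a * Real.exp (k * t M) + (bm + bM) / 2 =
      (T M + T m) / 2 + a / 2 * (Real.exp (k * t M) - Real.exp (k * t m)) ∧
    (T M + T m) / 2 < a * Real.exp (k * t M) + (bm + bM) / 2 := by
  have ha_pos : 0 < a := by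
    rcases ha_mem with ⟨i, him, rfl⟩ | ⟨j, hMj, rfl⟩
    · have hTi : T m < T i :=
        (hm_min i).lt_of_ne fun h => (hm_first i h.symm).not_gt him
      exact exp_chord_slope_pos hk (ht him) hTi
    · have hTj : T j < T M :=
        (hM_max j).lt_of_ne fun h => (hM_last j h).not_gt hMj
      rw [← neg_sub, ← neg_sub (exp (k * t M)), neg_div_neg_eq]
      exact exp_chord_slope_pos hk (ht hMj) hTj
  have hexp : exp (k * t m) < exp (k * t M) := exp_mul_lt_exp_mul_of_neg hk (ht hMm)
  have hIh : a * exp (k * t M) + (bm + bM) / 2 =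
      (T M + T m) / 2 + a / 2 * (exp (k * t M) - exp (k * t m)) := by
    subst hbm hbM; ring
  refine ⟨hIh, ?_⟩
  rw [hIh, lt_add_iff_pos_right]
  exact mul_pos (half_pos ha_pos) (sub_pos.mpr hexp)

/-- In case 1 (`k < 0` and `M < m`), the exponential
`I_h(t) = a·e^{kt} + (b_m + b_M)/2` satisfies
`I_h(t_M) = h(t_M) + (a/2)·(e^{k t_M} − e^{k t_m})`, where
`h = (max T + min T)/2 = (T_M + T_m)/2`, and consequently
`I_h(t_M) > h(t_M)`. -/
theorem case1_Ih_above_h_at_tM {n : ℕ}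
    (t : Fin n → ℝ) (ht : StrictMono t) (T : Fin n → ℝ)
    (k : ℝ) (hk : k < 0)
    (m M : Fin n)
    (hm_min : ∀ i, T m ≤ T i) (hm_first : ∀ i, T i = T m → m ≤ i)
    (hM_max : ∀ i, T i ≤ T M) (hM_last : ∀ i, T i = T M → i ≤ M)
    (hMm : M < m)
    (a : ℝ)
    (ha_mem :
      (∃ i, i < m ∧ a = (T i - T m) / (Real.exp (k * t i) - Real.exp (k * t m))) ∨
      (∃ j, M < j ∧ a = (T j - T M) / (Real.exp (k * t j) - Real.exp (k * t M))))
    (ha_min :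
      (∀ i, i < m → a ≤ (T i - T m) / (Real.exp (k * t i) - Real.exp (k * t m))) ∧
      (∀ j, M < j → a ≤ (T j - T M) / (Real.exp (k * t j) - Real.exp (k * t M))))
    (bm bM : ℝ)
    (hbm : bm = T m - a * Real.exp (k * t m))
    (hbM : bM = T M - a * Real.exp (k * t M)) :
    a * Real.exp (k * t M) + (bm + bM) / 2 =
      (T M + T m) / 2 + a / 2 * (Real.exp (k * t M) - Real.exp (k * t m)) ∧
    (T M + T m) / 2 < a * Real.exp (k * t M) + (bm + bM) / 2 :=
  case1_Ih_above_h_at_tM_general t ht T k hk m M hm_min hm_first hM_max hM_last hMm a ha_mem bm bM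
    hbm hbM
end
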